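/- arXiv:2109.04519 — 5 statements merged into one kernel-verified Lean document; each statement's English description precedes it below -/
import Mathlib

section
/- Let n and m be positive integers with n > α_t. Then 𝔡^m(I,n) ≤ 𝔡^{m+1}(I,n). -/
open Finset

/-- Sequences of length `ℓ` (positions `1..ℓ`) with entries in `{1,…,n}`,
encoded as functions `ℕ → ℕ` vanishing outside `[1, ℓ]`. -/
def Seqs (ℓ n : ℕ) : Set (ℕ → ℕ) :=
  {v | (∀ i ∈ Finset.Icc 1 ℓ, v i ∈ Finset.Icc 1 n) ∧ ∀ i, i ∉ Finset.Icc 1 ℓ → v i = 0}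

/-- Descent set of a sequence of length `ℓ`:
`Des(v) = {i ∈ {1,…,ℓ-1} : v_i > v_{i+1}}`. -/
def Des (ℓ : ℕ) (v : ℕ → ℕ) : Set ℕ :=
  {i | 1 ≤ i ∧ i < ℓ ∧ v (i + 1) < v i}

/-- Number of occurrences of the value `j` among positions `1..ℓ` of `v`. -/
def mult (ℓ : ℕ) (v : ℕ → ℕ) (j : ℕ) : ℕ :=
  ((Finset.Icc 1 ℓ).filter fun i => v i = j).card

/-- `𝔡^m(I, n)`: the number of sequences of length `n*m`, in which each of `1,…,n`
appears exactly `m` times, whose descent set is `I`. -/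
noncomputable def dP (m : ℕ) (I : Finset ℕ) (n : ℕ) : ℕ :=
  Set.ncard {w ∈ Seqs (n * m) n |
    Des (n * m) w = ↑I ∧ ∀ j ∈ Finset.Icc 1 n, mult (n * m) w j = m}

/-- `N(I, n)`: the number of sequences `v = (v_1, …, v_{α_t})` with entries in `{1,…,n}`
such that `Des v = I \ {α_t}` and `v_{α_t} ≠ 1`. -/
noncomputable def Ncount (I : Finset ℕ) (n : ℕ) : ℕ :=
  Set.ncard {v ∈ Seqs (I.sup id) n |
    Des (I.sup id) v = ↑(I.erase (I.sup id)) ∧ v (I.sup id) ≠ 1}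

/-- `D^m(I, n)`: the number of sequences `v = (v_1, …, v_{α_t})` with entries in `{1,…,n}`
such that `Des v = I \ {α_t}` and each of `1,…,n` appears at most `m` times in `v`. -/
noncomputable def Dcount (m : ℕ) (I : Finset ℕ) (n : ℕ) : ℕ :=
  Set.ncard {v ∈ Seqs (I.sup id) n |
    Des (I.sup id) v = ↑(I.erase (I.sup id)) ∧ ∀ j ∈ Finset.Icc 1 n, mult (I.sup id) v j ≤ m}

/-- `b_i(I)`: the number of sequences `v = (v_1, …, v_{α_t})` with entries in `{1,…,i+1}`
such that `Des v = I \ {α_t}`, every number in `{2,…,i+1}` occurs in `v`, and `v_{α_t} ≠ 1`. -/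
noncomputable def bcoef (I : Finset ℕ) (i : ℕ) : ℕ :=
  Set.ncard {v ∈ Seqs (I.sup id) (i + 1) |
    Des (I.sup id) v = ↑(I.erase (I.sup id)) ∧
    (∀ l ∈ Finset.Icc 2 (i + 1), ∃ j ∈ Finset.Icc 1 (I.sup id), v j = l) ∧
    v (I.sup id) ≠ 1}

/-- `L(I)`: the length of the longest run of consecutive integers contained in `I`. -/
def longestRun (I : Finset ℕ) : ℕ :=
  I.sup fun a => ((Finset.Icc a (I.sup id)).filter fun b => Finset.Icc a b ⊆ I).card

/-- `alphaVal I k` is the `k`-th smallest element of `I` (`1`-indexed), with `alphaVal I 0 = 0`. -/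
def alphaVal (I : Finset ℕ) (k : ℕ) : ℕ :=
  if k = 0 then 0 else (I.sort (· ≤ ·)).getD (k - 1) 0

/-- For a composition `A = (a_1,…,a_s)` of `t = |I|`, `sigmaC I A i` is
`σ_{i+1} = β_{a_1+⋯+a_i+1} + ⋯ + β_{a_1+⋯+a_{i+1}}`, where `β` is the sequence of first
differences of `(0, α_1, …, α_t)`; by telescoping this equals
`α_{a_1+⋯+a_{i+1}} - α_{a_1+⋯+a_i}`. -/
def sigmaC (I : Finset ℕ) {t : ℕ} (A : Composition t) (i : ℕ) : ℕ :=
  alphaVal I (A.sizeUpTo (i + 1)) - alphaVal I (A.sizeUpTo i)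

/-- `C(A, I)` for a composition `A = (a_1,…,a_r)`: the number of sequences
`v = (v_1, …, v_{α_t})` with entries in `{1,…,r}` such that `Des v = I \ {α_t}`
and the number `j` appears exactly `a_j` times in `v`, for each `j ∈ {1,…,r}`. -/
noncomputable def Ccount (I : Finset ℕ) {N : ℕ} (A : Composition N) : ℕ :=
  Set.ncard {v ∈ Seqs (I.sup id) A.length |
    Des (I.sup id) v = ↑(I.erase (I.sup id)) ∧
    ∀ j ∈ Finset.Icc 1 A.length, mult (I.sup id) v j = A.blocks.getD (j - 1) 0}

/-- The generalized binomial coefficient `C(a, i) = a(a-1)⋯(a-i+1)/i!` for an integer `a`. -/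
def genChoose (a : ℤ) (i : ℕ) : ℚ :=
  (∏ j ∈ Finset.range i, ((a : ℚ) - (j : ℚ))) / (Nat.factorial i)

/-! Let `a = max I`. A word `w ∈ S_n^(m)` with `Des w = I` is weakly increasing after
position `a`, so it is determined by its prefix `w_1 ⋯ w_a`. Keep that prefix and write the
letters still missing for `S_n^(m+1)` after it in increasing order: the prefix keeps its
descents, the suffix has none, and since the prefix holds at most `m` ones the suffix starts
with `1 < w_a`, so the descent at `a` survives. This injects the words counted by `𝔡^m(I,n)`
into those counted by `𝔡^{m+1}(I,n)`. -/

lemma mult_congr {a : ℕ} {v v' : ℕ → ℕ} (h : ∀ i ∈ Icc 1 a, v i = v' i) (j : ℕ) :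
    mult a v j = mult a v' j := by
  unfold mult
  rw [filter_congr fun i hi => by rw [h i hi]]

lemma mult_add_card_filter_Ioc {a L : ℕ} (ha : a ≤ L) (v : ℕ → ℕ) (j : ℕ) :
    mult a v j + #{i ∈ Ioc a L | v i = j} = mult L v j := by
  have hsplit : Icc 1 L = Icc 1 a ∪ Ioc a L := by
    ext i; simp only [mem_Icc, mem_union, mem_Ioc]; omega
  have hdisj : Disjoint (Icc 1 a) (Ioc a L) := by
    rw [disjoint_left]; intro i; simp only [mem_Icc, mem_Ioc]; omega
  rw [mult, mult, hsplit, filter_union, card_union_of_disjoint (disjoint_filter_filter hdisj)]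

lemma sum_mult_eq {a n : ℕ} {v : ℕ → ℕ} (hv : ∀ i ∈ Icc 1 a, v i ∈ Icc 1 n) :
    ∑ j ∈ Icc 1 n, mult a v j = a := by
  simp only [mult]
  rw [← card_eq_sum_card_fiberwise hv, Nat.card_Icc, Nat.add_sub_cancel]

lemma des_eq_inter_Iio {a L : ℕ} (ha : a ≤ L) (v : ℕ → ℕ) : Des a v = Des L v ∩ Set.Iio a := by
  ext i; simp only [Des, Set.mem_inter_iff, Set.mem_ofPred_eq, Set.mem_Iio]; omega

lemma des_congr {ℓ : ℕ} {v v' : ℕ → ℕ} (h : ∀ i ∈ Icc 1 ℓ, v i = v' i) : Des ℓ v = Des ℓ v' := by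
  ext i
  simp only [Des, Set.mem_ofPred_eq]
  constructor <;> rintro ⟨hi, hiℓ, hlt⟩ <;>
    refine ⟨hi, hiℓ, ?_⟩ <;>
    simpa [h i (mem_Icc.2 ⟨hi, hiℓ.le⟩), h (i + 1) (mem_Icc.2 ⟨by omega, hiℓ⟩)] using hlt

lemma seqs_finite (ℓ n : ℕ) : (Seqs ℓ n).Finite := by
  refine Set.Finite.of_finite_image (f := fun v (i : Fin (ℓ + 1)) => v i) ?_ ?_
  · refine (Set.Finite.pi' fun _ => Set.finite_Iic n).subset ?_
    rintro _ ⟨v, hv, rfl⟩ i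
    by_cases hi : (i : ℕ) ∈ Icc 1 ℓ
    · exact (mem_Icc.1 (hv.1 i hi)).2
    · simp [hv.2 i hi]
  · intro v hv v' hv' h
    funext i
    by_cases hi : i ∈ Icc 1 ℓ
    · exact congrFun h ⟨i, by simp at hi; omega⟩
    · rw [hv.2 i hi, hv'.2 i hi]

lemma card_filter_le_succ (s : Finset ℕ) (u : ℕ → ℕ) (j : ℕ) :
    #{k ∈ s | u k ≤ j + 1} = #{k ∈ s | u k ≤ j} + #{k ∈ s | u k = j + 1} := by
  rw [← card_union_of_disjoint (disjoint_filter.2 fun _ _ h => by omega), ← filter_or]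
  congr 1
  exact filter_congr fun _ _ => by omega

lemma MonotoneOn.le_iff_sub_le_card_filter {u : ℕ → ℕ} {a L i : ℕ}
    (hu : MonotoneOn u (Set.Ioc a L)) (hi : i ∈ Ioc a L) (j : ℕ) :
    u i ≤ j ↔ i - a ≤ #{k ∈ Ioc a L | u k ≤ j} := by
  have hi' := mem_Ioc.1 hi
  constructor
  · intro hij
    have hsub : Ioc a i ⊆ {k ∈ Ioc a L | u k ≤ j} := fun k hk => by
      have hk' := mem_Ioc.1 hk
      refine mem_filter.2 ⟨mem_Ioc.2 ⟨hk'.1, by omega⟩, le_trans ?_ hij⟩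
      exact hu (by simp only [Set.mem_Ioc]; omega) (by simpa using hi') hk'.2
    simpa using card_le_card hsub
  · intro hcard
    by_contra! hij
    have hsub : {k ∈ Ioc a L | u k ≤ j} ⊆ Ioo a i := fun k hk => by
      obtain ⟨hk, hkj⟩ := mem_filter.1 hk
      have hk' := mem_Ioc.1 hk
      refine mem_Ioo.2 ⟨hk'.1, lt_of_not_ge fun hik => ?_⟩
      exact absurd (hu (by simpa using hi') (by simpa using hk') hik) (by omega)
    have := card_le_card hsub
    simp only [Nat.card_Ioo] at this
    omega

lemma monotoneOn_of_des_le {L a : ℕ} {u : ℕ → ℕ} (h : ∀ i ∈ Des L u, i ≤ a) :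
    MonotoneOn u (Set.Ioc a L) := by
  refine monotoneOn_of_le_succ Set.ordConnected_Ioc fun k _ hk hk1 => ?_
  simp only [Order.succ_eq_add_one, Set.mem_Ioc] at hk hk1 ⊢
  by_contra! hlt
  exact absurd (h k ⟨by omega, by omega, hlt⟩) (by omega)

/-- Positions `1..a` of `v` form a prefix of some word in `S_n^(m)`. -/
def IsExtendable (n m a : ℕ) (v : ℕ → ℕ) : Prop :=
  (∀ i ∈ Icc 1 a, v i ∈ Icc 1 n) ∧ ∀ j ∈ Icc 1 n, mult a v j ≤ m

lemma IsExtendable.mono {n m m' a : ℕ} {v : ℕ → ℕ} (hv : IsExtendable n m a v) (hm : m ≤ m') :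
    IsExtendable n m' a v :=
  ⟨hv.1, fun j hj => (hv.2 j hj).trans hm⟩

lemma isExtendable_of_mult_eq {n m a : ℕ} {w : ℕ → ℕ} (hw : w ∈ Seqs (n * m) n)
    (hmult : ∀ j ∈ Icc 1 n, mult (n * m) w j = m) (ha : a ≤ n * m) : IsExtendable n m a w :=
  ⟨fun i hi => hw.1 i (Icc_subset_Icc_right ha hi), fun j hj =>
    hmult j hj ▸ Nat.le.intro (mult_add_card_filter_Ioc ha w j)⟩

/-- The number of letters `≤ j` that a prefix `v` of length `a` leaves to be placed in a
word of `S_n^(m)`. -/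
def restCount (m a : ℕ) (v : ℕ → ℕ) (j : ℕ) : ℕ :=
  ∑ l ∈ Icc 1 j, (m - mult a v l)

section restCount

variable {n m a : ℕ} {v : ℕ → ℕ}

lemma restCount_zero : restCount m a v 0 = 0 := by
  simp [restCount]

lemma restCount_succ (j : ℕ) :
    restCount m a v (j + 1) = restCount m a v j + (m - mult a v (j + 1)) :=
  sum_Icc_succ_top (Nat.le_add_left 1 j) _

lemma restCount_mono : Monotone (restCount m a v) := fun _ _ h =>
  sum_le_sum_of_subset (Icc_subset_Icc_right h)

lemma IsExtendable.restCount_add (hv : IsExtendable n m a v) : restCount m a v n + a = n * m := by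
  have h : restCount m a v n + ∑ j ∈ Icc 1 n, mult a v j = ∑ _j ∈ Icc 1 n, m := by
    rw [restCount, ← sum_add_distrib]
    exact sum_congr rfl fun j hj => Nat.sub_add_cancel (hv.2 j hj)
  rwa [sum_mult_eq hv.1, sum_const, Nat.card_Icc, Nat.add_sub_cancel, smul_eq_mul] at h

end restCount

/-- The completion of a prefix `v` of length `a` to a word of length `n * m`: positions after
`a` receive the letters still missing (`m - mult a v j` copies of each `j`) in weakly
increasing order, so that exactly `restCount m a v j` of them are `≤ j`. -/
noncomputable def completion (n m a : ℕ) (v : ℕ → ℕ) (i : ℕ) : ℕ :=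
  if i ∈ Icc 1 a then v i
  else if i ∈ Ioc a (n * m) then sInf {j | i - a ≤ restCount m a v j}
  else 0

section completion

variable {n m a i : ℕ} {v : ℕ → ℕ}

lemma completion_of_mem_Icc (hi : i ∈ Icc 1 a) : completion n m a v i = v i :=
  if_pos hi

lemma completion_of_notMem_Icc (ha : a ≤ n * m) (hi : i ∉ Icc 1 (n * m)) :
    completion n m a v i = 0 := by
  simp only [mem_Icc] at hi
  rw [completion, if_neg (by simp only [mem_Icc]; omega), if_neg (by simp only [mem_Ioc]; omega)]

lemma completion_congr {v' : ℕ → ℕ} (h : ∀ i ∈ Icc 1 a, v i = v' i) :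
    completion n m a v = completion n m a v' := by
  funext i
  simp only [completion, restCount, mult_congr h]
  split_ifs with hi
  · exact h i hi
  all_goals rfl

lemma IsExtendable.completion_le_iff (hv : IsExtendable n m a v) (hi : i ∈ Ioc a (n * m))
    (j : ℕ) : completion n m a v i ≤ j ↔ i - a ≤ restCount m a v j := by
  have hi' := mem_Ioc.1 hi
  have hn : i - a ≤ restCount m a v n := by have := hv.restCount_add; omega
  rw [completion, if_neg (by simp only [mem_Icc]; omega), if_pos hi]
  exact ⟨fun h => (Nat.sInf_mem (s := {j | i - a ≤ restCount m a v j}) ⟨n, hn⟩).trans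
    (restCount_mono h), fun h => Nat.sInf_le h⟩

lemma IsExtendable.completion_mem_Icc (hv : IsExtendable n m a v) (hi : i ∈ Ioc a (n * m)) :
    completion n m a v i ∈ Icc 1 n := by
  have hi' := mem_Ioc.1 hi
  have hle := hv.completion_le_iff hi
  have := hv.restCount_add
  refine mem_Icc.2 ⟨Nat.one_le_iff_ne_zero.2 fun h0 => ?_, (hle n).2 (by omega)⟩
  have := (hle 0).1 h0.le
  rw [restCount_zero] at this
  omega

lemma IsExtendable.monotoneOn_completion (hv : IsExtendable n m a v) :
    MonotoneOn (completion n m a v) (Set.Ioc a (n * m)) := by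
  intro k hk i hi hki
  rw [← coe_Ioc] at hk hi
  have := (hv.completion_le_iff hi _).1 le_rfl
  exact (hv.completion_le_iff hk _).2 (by omega)

lemma IsExtendable.card_filter_completion_le (hv : IsExtendable n m a v) {j : ℕ} (hj : j ≤ n) :
    #{k ∈ Ioc a (n * m) | completion n m a v k ≤ j} = restCount m a v j := by
  have hjn := restCount_mono (a := a) (m := m) (v := v) hj
  have := hv.restCount_add
  have hseg : {k ∈ Ioc a (n * m) | completion n m a v k ≤ j} = Ioc a (a + restCount m a v j) := by
    ext k
    rw [mem_filter]
    constructor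
    · rintro ⟨hk, hkj⟩
      have := (hv.completion_le_iff hk j).1 hkj
      simp only [mem_Ioc] at hk ⊢
      omega
    · intro hk
      have hk' : k ∈ Ioc a (n * m) := by simp only [mem_Ioc] at hk ⊢; omega
      refine ⟨hk', (hv.completion_le_iff hk' j).2 ?_⟩
      simp only [mem_Ioc] at hk
      omega
  rw [hseg, Nat.card_Ioc, Nat.add_sub_cancel_left]

lemma IsExtendable.mult_completion (hv : IsExtendable n m a v) {j : ℕ} (hj : j ∈ Icc 1 n) :
    mult (n * m) (completion n m a v) j = m := by
  obtain ⟨hj1, hjn⟩ := mem_Icc.1 hj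
  obtain ⟨j, rfl⟩ := Nat.exists_eq_add_of_le' hj1
  have hsucc := card_filter_le_succ (Ioc a (n * m)) (completion n m a v) j
  rw [hv.card_filter_completion_le hjn, hv.card_filter_completion_le (by omega),
    restCount_succ] at hsucc
  have hsplit := mult_add_card_filter_Ioc (a := a) (L := n * m) (by have := hv.restCount_add; omega)
    (completion n m a v) (j + 1)
  have hpre : mult a (completion n m a v) (j + 1) = mult a v (j + 1) :=
    mult_congr (fun i hi => completion_of_mem_Icc hi) _
  have := hv.2 _ hj
  omega

lemma IsExtendable.completion_mem_seqs (hv : IsExtendable n m a v) :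
    completion n m a v ∈ Seqs (n * m) n := by
  have ha : a ≤ n * m := by have := hv.restCount_add; omega
  refine ⟨fun i hi => ?_, fun i hi => completion_of_notMem_Icc ha hi⟩
  by_cases hia : i ≤ a
  · have hi' : i ∈ Icc 1 a := mem_Icc.2 ⟨(mem_Icc.1 hi).1, hia⟩
    rw [completion_of_mem_Icc hi']
    exact hv.1 i hi'
  · exact hv.completion_mem_Icc (mem_Ioc.2 ⟨by omega, (mem_Icc.1 hi).2⟩)

lemma IsExtendable.des_completion (hv : IsExtendable n m a v) (ha : 1 ≤ a) (hva : 2 ≤ v a)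
    (hv1 : mult a v 1 < m) : Des (n * m) (completion n m a v) = insert a (Des a v) := by
  have hva' := mem_Icc.1 (hv.1 a (mem_Icc.2 ⟨ha, le_rfl⟩))
  have hL := hv.restCount_add
  have h1 : 1 ≤ restCount m a v 1 := by
    have := restCount_succ (m := m) (a := a) (v := v) 0
    rw [restCount_zero, zero_add] at this
    omega
  have hrest := restCount_mono (m := m) (a := a) (v := v) (show 1 ≤ n by omega)
  have haL : a + 1 ∈ Ioc a (n * m) := mem_Ioc.2 ⟨by omega, by omega⟩
  have hsucc : completion n m a v (a + 1) = 1 :=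
    le_antisymm ((hv.completion_le_iff haL 1).2 (by omega))
      (mem_Icc.1 (hv.completion_mem_Icc haL)).1
  have hpre : Des a (completion n m a v) = Des a v :=
    des_congr fun i hi => completion_of_mem_Icc hi
  rw [des_eq_inter_Iio (by omega : a ≤ n * m)] at hpre
  ext i
  rcases lt_trichotomy i a with hia | rfl | hia
  · rw [← hpre]
    simp [hia, hia.ne]
  · simp only [Set.mem_insert_iff, true_or, iff_true]
    refine ⟨ha, by omega, ?_⟩
    rw [completion_of_mem_Icc (mem_Icc.2 ⟨ha, le_rfl⟩), hsucc]
    omega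
  · have hiv : i ∉ Des a v := fun h => by have := h.2.1; omega
    simp only [Set.mem_insert_iff, hia.ne', hiv, or_false, iff_false]
    rintro ⟨-, hiL, hlt⟩
    have hmono := hv.monotoneOn_completion (by simp only [Set.mem_Ioc]; omega)
      (by simp only [Set.mem_Ioc]; omega) (Nat.le_add_right i 1)
    omega

end completion

section words

variable {n m a : ℕ} {w : ℕ → ℕ}

lemma card_filter_le_eq_restCount (hw : w ∈ Seqs (n * m) n)
    (hmult : ∀ j ∈ Icc 1 n, mult (n * m) w j = m) (ha : a ≤ n * m) {j : ℕ} (hj : j ≤ n) :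
    #{k ∈ Ioc a (n * m) | w k ≤ j} = restCount m a w j := by
  induction j with
  | zero =>
    rw [restCount_zero, card_eq_zero, filter_eq_empty_iff]
    intro k hk
    have := (mem_Icc.1 (hw.1 k (by simp only [mem_Ioc, mem_Icc] at hk ⊢; omega))).1
    omega
  | succ j ih =>
    rw [card_filter_le_succ, ih (by omega), restCount_succ]
    have := mult_add_card_filter_Ioc ha w (j + 1)
    have := hmult (j + 1) (mem_Icc.2 ⟨by omega, hj⟩)
    omega

/-- After its last descent a word is weakly increasing, so it is determined by its prefix. -/
lemma eq_completion (hw : w ∈ Seqs (n * m) n) (hmult : ∀ j ∈ Icc 1 n, mult (n * m) w j = m)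
    (ha : IsGreatest (Des (n * m) w) a) : w = completion n m a w := by
  have haL : a ≤ n * m := ha.1.2.1.le
  have hv := isExtendable_of_mult_eq hw hmult haL
  funext i
  by_cases hia : i ∈ Icc 1 a
  · exact (completion_of_mem_Icc hia).symm
  by_cases hi : i ∈ Ioc a (n * m)
  · have hwi := mem_Icc.1 (hw.1 i (by simp only [mem_Icc, mem_Ioc] at hi ⊢; omega))
    have hci := mem_Icc.1 (hv.completion_mem_Icc hi)
    have hw_le : ∀ j ≤ n, w i ≤ j ↔ i - a ≤ restCount m a w j := fun j hj => by
      rw [(monotoneOn_of_des_le ha.2).le_iff_sub_le_card_filter hi,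
        card_filter_le_eq_restCount hw hmult haL hj]
    exact le_antisymm ((hw_le _ hci.2).2 ((hv.completion_le_iff hi _).1 le_rfl))
      ((hv.completion_le_iff hi _).2 ((hw_le _ hwi.2).1 le_rfl))
  · have hi' : i ∉ Icc 1 (n * m) := by simp only [mem_Icc, mem_Ioc] at hia hi ⊢; omega
    rw [hw.2 i hi', completion_of_notMem_Icc haL hi']

lemma completion_succ_mem (hw : w ∈ Seqs (n * m) n)
    (hmult : ∀ j ∈ Icc 1 n, mult (n * m) w j = m) (ha : IsGreatest (Des (n * m) w) a) :
    completion n (m + 1) a w ∈ Seqs (n * (m + 1)) n ∧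
      Des (n * (m + 1)) (completion n (m + 1) a w) = Des (n * m) w ∧
      ∀ j ∈ Icc 1 n, mult (n * (m + 1)) (completion n (m + 1) a w) j = m + 1 := by
  obtain ⟨⟨ha1, haL, hdesc⟩, hmax⟩ := ha
  have hv := isExtendable_of_mult_eq hw hmult haL.le
  have hv' := hv.mono (Nat.le_succ m)
  have hwa := mem_Icc.1 (hv.1 a (mem_Icc.2 ⟨ha1, le_rfl⟩))
  have hwa1 := mem_Icc.1 (hw.1 (a + 1) (mem_Icc.2 ⟨by omega, haL⟩))
  refine ⟨hv'.completion_mem_seqs, ?_, fun j hj => hv'.mult_completion hj⟩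
  rw [hv'.des_completion ha1 (by omega)
    (Nat.lt_succ_of_le (hv.2 1 (mem_Icc.2 ⟨le_rfl, by omega⟩))), des_eq_inter_Iio haL.le]
  ext i
  simp only [Set.mem_insert_iff, Set.mem_inter_iff, Set.mem_Iio]
  constructor
  · rintro (rfl | ⟨hi, -⟩)
    exacts [⟨ha1, haL, hdesc⟩, hi]
  · intro hi
    rcases (hmax hi).lt_or_eq with hlt | rfl
    exacts [Or.inr ⟨hi, hlt⟩, Or.inl rfl]

end words

theorem stmt_0_general (I : Finset ℕ) (hI : I.Nonempty)
    (n m : ℕ) :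
    dP m I n ≤ dP (m + 1) I n := by
  set a := I.max' hI
  have hmax : ∀ {L w}, Des L w = ↑I → IsGreatest (Des L w) a := fun h => h ▸ I.isGreatest_max' hI
  refine Set.ncard_le_ncard_of_injOn (completion n (m + 1) a) ?_ ?_
    ((seqs_finite _ _).subset fun w hw => hw.1)
  · rintro w ⟨hw, hdes, hmult⟩
    rw [← hdes]
    exact completion_succ_mem hw hmult (hmax hdes)
  · rintro w ⟨hw, hdes, hmult⟩ w' ⟨hw', hdes', hmult'⟩ h
    have hprefix : ∀ i ∈ Icc 1 a, w i = w' i := fun i hi => by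
      simpa only [completion_of_mem_Icc hi] using congrFun h i
    calc w = completion n m a w := eq_completion hw hmult (hmax hdes)
      _ = completion n m a w' := completion_congr hprefix
      _ = w' := (eq_completion hw' hmult' (hmax hdes')).symm

/-- for positive integers `n, m` with `n > α_t`,
`𝔡^m(I,n) ≤ 𝔡^{m+1}(I,n)`. -/
theorem stmt_0 (I : Finset ℕ) (hI : I.Nonempty) (hIpos : ∀ x ∈ I, 1 ≤ x)
    (n m : ℕ) (hm : 1 ≤ m) (hn : I.sup id < n) :
    dP m I n ≤ dP (m + 1) I n :=
  stmt_0_general I hI n m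
end

section
/- Suppose α_t − t ≥ 1 and n is an integer with n ≥ L + 1. Then 𝔡^{α_t − t}(I,n) < 𝔡^{α_t − t + 1}(I,n); in other words, the stabilization point of the function m ↦ 𝔡^m(I,n) is exactly α_t − t + 1. -/
open Finset

/-!
A word with descent set `I` is weakly increasing after its last descent `α_t`, so it is
determined by its prefix of length `α_t`. The prefixes that occur for multiplicity `m` are the
sequences with descent set `I \ {α_t}` in which every value occurs at most `m` times and some value
below the last letter is still available for the descent at `α_t`; this set grows with `m`.
For `m = α_t - t`, the prefix `p ↦ 1 + (length of the run of I starting at p)` uses the value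
`1` exactly `m` times, every other value at most `m + 1` times, and ends in `2`; so it occurs for
`m + 1` but not for `m`. Its values are at most `L + 1 ≤ n`.
-/

namespace DescentCount

section SortedArrangement

lemma card_filter_le_eq_sum {α : Type*} (s : Finset α) (u : α → ℕ) (j : ℕ) :
    #{x ∈ s | u x ≤ j} = ∑ k ∈ range (j + 1), #{x ∈ s | u x = k} := by
  rw [card_eq_sum_card_fiberwise (f := u) (t := range (j + 1))]
  · refine sum_congr rfl fun k hk => congrArg card ?_
    rw [filter_filter]
    exact filter_congr fun x _ => ⟨And.right, fun h => ⟨h ▸ Nat.lt_succ_iff.1 (mem_range.1 hk), h⟩⟩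
  · intro x hx
    simpa [Nat.lt_succ_iff] using (mem_filter.1 hx).2

lemma eq_of_sum_range_succ_eq {f g : ℕ → ℕ}
    (h : ∀ j, ∑ k ∈ range (j + 1), f k = ∑ k ∈ range (j + 1), g k) : f = g := by
  funext j
  cases j with
  | zero => simpa using h 0
  | succ j =>
    have := h (j + 1)
    rw [sum_range_succ, sum_range_succ _ (j + 1), h j] at this
    omega

variable {T : ℕ}

lemma le_iff_le_card_filter_le {u : ℕ → ℕ} (hu : MonotoneOn u (Icc 1 T)) {q : ℕ}
    (hq : q ∈ Icc 1 T) (j : ℕ) : u q ≤ j ↔ q ≤ #{x ∈ Icc 1 T | u x ≤ j} := by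
  have hqT := mem_Icc.1 hq
  constructor
  · intro hj
    calc q = #(Icc 1 q) := by simp
      _ ≤ _ := card_le_card fun x hx => by
        have hx' := mem_Icc.1 hx
        have hxT : x ∈ Icc 1 T := mem_Icc.2 ⟨hx'.1, hx'.2.trans hqT.2⟩
        exact mem_filter.2 ⟨hxT, (hu hxT hq hx'.2).trans hj⟩
  · intro hle
    by_contra! hj
    have hsub : {x ∈ Icc 1 T | u x ≤ j} ⊆ Icc 1 (q - 1) := fun x hx => by
      obtain ⟨hxT, hxj⟩ := mem_filter.1 hx
      have : x < q := by
        by_contra! hqx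
        exact absurd ((hu hq hxT hqx).trans hxj) hj.not_ge
      simp only [mem_Icc] at hxT ⊢
      omega
    have := card_le_card hsub
    simp only [Nat.card_Icc] at this
    omega

lemma eqOn_of_monotoneOn_of_card_filter_eq {u v : ℕ → ℕ} (hu : MonotoneOn u (Icc 1 T))
    (hv : MonotoneOn v (Icc 1 T))
    (h : ∀ k, #{x ∈ Icc 1 T | u x = k} = #{x ∈ Icc 1 T | v x = k}) :
    Set.EqOn u v (Icc 1 T) := fun q hq => by
  have key : ∀ j, u q ≤ j ↔ v q ≤ j := fun j => by
    rw [le_iff_le_card_filter_le hu hq, le_iff_le_card_filter_le hv hq, card_filter_le_eq_sum,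
      card_filter_le_eq_sum]
    simp only [h]
  exact le_antisymm ((key _).2 le_rfl) ((key _).1 le_rfl)

def cumCount (c : ℕ → ℕ) (j : ℕ) : ℕ := ∑ k ∈ range (j + 1), c k

/-- The `q`-th smallest element (counting from `1`) of the multiset in which `k` has
multiplicity `c k`. -/
noncomputable def sortedEntry (c : ℕ → ℕ) (q : ℕ) : ℕ := sInf {j | q ≤ cumCount c j}

variable {c : ℕ → ℕ} {n : ℕ}

lemma cumCount_mono : Monotone (cumCount c) := fun _ _ h =>
  sum_le_sum_of_subset (range_subset_range.2 (Nat.succ_le_succ h))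

lemma cumCount_le_of_support (hc : ∀ k ∉ Icc 1 n, c k = 0) (j : ℕ) :
    cumCount c j ≤ cumCount c n := by
  rcases le_total j n with hjn | hnj
  · exact cumCount_mono hjn
  · refine (sum_subset (range_subset_range.2 (Nat.succ_le_succ hnj)) fun k _ hk => hc k ?_).ge
    simp only [mem_range, mem_Icc] at hk ⊢
    omega

lemma sortedEntry_le_iff {q : ℕ} (hq : q ≤ cumCount c n) (j : ℕ) :
    sortedEntry c q ≤ j ↔ q ≤ cumCount c j :=
  ⟨fun h => (Nat.sInf_mem (⟨n, hq⟩ : {j | q ≤ cumCount c j}.Nonempty)).trans (cumCount_mono h),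
    fun h => Nat.sInf_le h⟩

lemma monotoneOn_sortedEntry : MonotoneOn (sortedEntry c) (Icc 1 (cumCount c n)) :=
  fun q hq q' hq' hqq' => by
    rw [sortedEntry_le_iff (mem_Icc.1 hq).2]
    exact hqq'.trans ((sortedEntry_le_iff (mem_Icc.1 hq').2 _).1 le_rfl)

lemma sortedEntry_mem_Icc (hc : ∀ k ∉ Icc 1 n, c k = 0) {q : ℕ} (hq : q ∈ Icc 1 (cumCount c n)) :
    sortedEntry c q ∈ Icc 1 n := by
  have hq' := mem_Icc.1 hq
  have hc0 : cumCount c 0 = 0 := by simp [cumCount, hc 0]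
  refine mem_Icc.2 ⟨Nat.one_le_iff_ne_zero.2 fun h0 => ?_, (sortedEntry_le_iff hq'.2 n).2 hq'.2⟩
  have := (sortedEntry_le_iff hq'.2 0).1 h0.le
  omega

lemma card_filter_sortedEntry_eq (hc : ∀ k ∉ Icc 1 n, c k = 0) (j : ℕ) :
    #{q ∈ Icc 1 (cumCount c n) | sortedEntry c q = j} = c j := by
  refine congrFun (eq_of_sum_range_succ_eq
    (f := fun j => #{q ∈ Icc 1 (cumCount c n) | sortedEntry c q = j}) fun j => ?_) j
  rw [← card_filter_le_eq_sum]
  have hle := cumCount_le_of_support hc j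
  have : {q ∈ Icc 1 (cumCount c n) | sortedEntry c q ≤ j} = Icc 1 (cumCount c j) := by
    ext q
    simp only [mem_filter, mem_Icc]
    constructor
    · rintro ⟨hq, hqj⟩
      exact ⟨hq.1, (sortedEntry_le_iff hq.2 j).1 hqj⟩
    · rintro hq
      exact ⟨⟨hq.1, hq.2.trans hle⟩, (sortedEntry_le_iff (hq.2.trans hle) j).2 hq.2⟩
  rw [this, Nat.card_Icc, Nat.add_sub_cancel]
  rfl

end SortedArrangement

section Words

lemma seqs_finite (ℓ n : ℕ) : (Seqs ℓ n).Finite := by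
  refine (Set.finite_range fun (g : Fin (ℓ + 1) → Fin (n + 1)) (i : ℕ) =>
    if h : i < ℓ + 1 then (g ⟨i, h⟩ : ℕ) else 0).subset fun v hv => ?_
  have hvn : ∀ i, v i < n + 1 := fun i => by
    by_cases hi : i ∈ Icc 1 ℓ
    · exact Nat.lt_succ_of_le (mem_Icc.1 (hv.1 i hi)).2
    · rw [hv.2 i hi]; omega
  refine ⟨fun i => ⟨v i, hvn i⟩, funext fun i => ?_⟩
  by_cases hi : i < ℓ + 1
  · simp [hi]
  · simp only [hi, dite_false]
    exact (hv.2 i (by simp only [mem_Icc]; omega)).symm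

variable {a n : ℕ} {v w : ℕ → ℕ}

lemma mult_congr (h : ∀ i ∈ Icc 1 a, v i = w i) (j : ℕ) : mult a v j = mult a w j :=
  congrArg card (filter_congr fun i hi => by rw [h i hi])

lemma mult_add (T : ℕ) (j : ℕ) :
    mult (a + T) v j = mult a v j + #{q ∈ Icc 1 T | v (a + q) = j} := by
  have hsplit : Icc 1 (a + T) = Icc 1 a ∪ (Icc 1 T).map (addLeftEmbedding a) := by
    ext i
    simp only [map_add_left_Icc, mem_union, mem_Icc]
    omega
  have hdisj : Disjoint (Icc 1 a) ((Icc 1 T).map (addLeftEmbedding a)) := by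
    rw [map_add_left_Icc, disjoint_left]
    intro i hi hi'
    simp only [mem_Icc] at hi hi'
    omega
  rw [mult, hsplit, filter_union, card_union_of_disjoint (disjoint_filter_filter hdisj),
    filter_map, card_map]
  rfl

lemma sum_mult (hv : v ∈ Seqs a n) : ∑ j ∈ Icc 1 n, mult a v j = a := by
  simp only [mult]
  rw [← card_eq_sum_card_fiberwise fun i hi => hv.1 i hi, Nat.card_Icc, Nat.add_sub_cancel]

lemma mult_eq_zero_of_notMem (hv : v ∈ Seqs a n) {j : ℕ} (hj : j ∉ Icc 1 n) : mult a v j = 0 :=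
  card_eq_zero.2 (filter_eq_empty_iff.2 fun i hi hij => hj (hij ▸ hv.1 i hi))

lemma mem_Des_iff_of_eqOn {b : ℕ} (hab : a ≤ b) (h : ∀ i ≤ a, v i = w i) {i : ℕ} :
    i ∈ Des a v ↔ i ∈ Des b w ∧ i < a := by
  simp only [Des, Set.mem_ofPred_eq]
  constructor
  · rintro ⟨h1, h2, h3⟩
    rw [h i h2.le, h (i + 1) h2] at h3
    exact ⟨⟨h1, by omega, h3⟩, h2⟩
  · rintro ⟨⟨h1, _, h3⟩, h2⟩
    rw [← h i h2.le, ← h (i + 1) h2] at h3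
    exact ⟨h1, h2, h3⟩

lemma mem_erase_sup_iff {I : Finset ℕ} {i : ℕ} : i ∈ I.erase (I.sup id) ↔ i ∈ I ∧ i < I.sup id :=
  ⟨fun h => ⟨mem_of_mem_erase h,
      (le_sup (f := id) (mem_of_mem_erase h)).lt_of_ne (ne_of_mem_erase h)⟩,
    fun h => mem_erase.2 ⟨h.2.ne, h.1⟩⟩

lemma sup_id_mem {I : Finset ℕ} (hI : I.Nonempty) : I.sup id ∈ I := by
  simpa using sup_mem_of_nonempty (f := id) hI

end Words

section Completion

def words (m : ℕ) (I : Finset ℕ) (n : ℕ) : Set (ℕ → ℕ) :=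
  {w ∈ Seqs (n * m) n | Des (n * m) w = ↑I ∧ ∀ j ∈ Icc 1 n, mult (n * m) w j = m}

lemma dP_eq_ncard_words (m : ℕ) (I : Finset ℕ) (n : ℕ) : dP m I n = (words m I n).ncard := rfl

/-- The possible prefixes `w_1 ⋯ w_{α_t}` of the words in `words m I n`: some value `j < w_{α_t}`
must still be available, to produce the descent at `α_t`. -/
def prefixes (m : ℕ) (I : Finset ℕ) (n : ℕ) : Set (ℕ → ℕ) :=
  {v ∈ Seqs (I.sup id) n | Des (I.sup id) v = ↑(I.erase (I.sup id)) ∧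
    (∀ j, mult (I.sup id) v j ≤ m) ∧ ∃ j, 1 ≤ j ∧ mult (I.sup id) v j < m ∧ j < v (I.sup id)}

def restrict (a : ℕ) (w : ℕ → ℕ) : ℕ → ℕ := fun i => if i ≤ a then w i else 0

def deficit (a n m : ℕ) (v : ℕ → ℕ) (j : ℕ) : ℕ := if j ∈ Icc 1 n then m - mult a v j else 0

noncomputable def complete (a n m : ℕ) (v : ℕ → ℕ) (i : ℕ) : ℕ :=
  if i ≤ a then v i else if i ≤ n * m then sortedEntry (deficit a n m v) (i - a) else 0

variable {a n m : ℕ} {v w : ℕ → ℕ}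

lemma deficit_eq_zero {k : ℕ} (hk : k ∉ Icc 1 n) : deficit a n m v k = 0 := if_neg hk

lemma deficit_congr (h : ∀ i ∈ Icc 1 a, v i = w i) : deficit a n m v = deficit a n m w := by
  funext j
  simp only [deficit, mult_congr h]

lemma complete_of_lt {i : ℕ} (hai : a < i) (hin : i ≤ n * m) :
    complete a n m v i = sortedEntry (deficit a n m v) (i - a) := by
  simp only [complete, hai.not_ge, hin, if_false, if_true]

lemma cumCount_deficit (hv : v ∈ Seqs a n) (hm : ∀ j, mult a v j ≤ m) :
    cumCount (deficit a n m v) n = n * m - a := by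
  have hsum : cumCount (deficit a n m v) n = ∑ j ∈ Icc 1 n, (m - mult a v j) := by
    rw [cumCount, ← sum_subset (fun j hj => mem_range.2 (Nat.lt_succ_of_le (mem_Icc.1 hj).2))
      fun j _ hj => deficit_eq_zero hj]
    exact sum_congr rfl fun j hj => if_pos hj
  have htotal : ∑ j ∈ Icc 1 n, (m - mult a v j) + a = n * m :=
    calc ∑ j ∈ Icc 1 n, (m - mult a v j) + a
        = ∑ j ∈ Icc 1 n, (m - mult a v j + mult a v j) := by rw [sum_add_distrib, sum_mult hv]
      _ = n * m := by simp [Nat.sub_add_cancel (hm _)]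
  omega

lemma restrict_complete (hv : v ∈ Seqs a n) : restrict a (complete a n m v) = v := by
  funext i
  by_cases hi : i ≤ a
  · simp [restrict, complete, hi]
  · simp only [restrict, hi, if_false]
    exact (hv.2 i (by simp only [mem_Icc]; omega)).symm

variable {I : Finset ℕ}

lemma sup_mem_Des_of_mem_words (hI : I.Nonempty) (hw : w ∈ words m I n) :
    I.sup id ∈ Des (n * m) w := by
  rw [hw.2.1]
  exact sup_id_mem hI

lemma monotoneOn_of_mem_words (hw : w ∈ words m I n) :
    MonotoneOn w (Icc (I.sup id + 1) (n * m)) := by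
  rw [coe_Icc]
  refine monotoneOn_of_le_succ Set.ordConnected_Icc fun i _ hi hi' => ?_
  rw [Set.mem_Icc] at hi hi'
  rw [Order.succ_eq_add_one] at hi' ⊢
  by_contra! hdesc
  have hiI : i ∈ Des (n * m) w := ⟨by omega, by omega, hdesc⟩
  rw [hw.2.1] at hiI
  have : i ≤ I.sup id := le_sup (f := id) (Finset.mem_coe.1 hiI)
  omega

lemma restrict_mem_prefixes (hI : I.Nonempty) (hw : w ∈ words m I n) :
    restrict (I.sup id) w ∈ prefixes m I n := by
  unfold prefixes
  set a := I.sup id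
  have hdesc := sup_mem_Des_of_mem_words hI hw
  obtain ⟨hwseq, hwdes, hwmult⟩ := hw
  have ha : a < n * m := hdesc.2.1
  have hagree : ∀ i ≤ a, restrict a w i = w i := fun i hi => if_pos hi
  have hsplit : ∀ j, mult a (restrict a w) j + #{q ∈ Icc 1 (n * m - a) | w (a + q) = j} =
      mult (n * m) w j := fun j => by
    rw [mult_congr (fun i hi => hagree i (mem_Icc.1 hi).2), ← mult_add, Nat.add_sub_cancel' ha.le]
  have hwnext : w (a + 1) ∈ Icc 1 n := hwseq.1 (a + 1) (mem_Icc.2 ⟨by omega, ha⟩)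
  refine ⟨⟨fun i hi => ?_, fun i hi => ?_⟩, ?_, fun j => ?_,
    w (a + 1), (mem_Icc.1 hwnext).1, ?_, ?_⟩
  · rw [hagree i (mem_Icc.1 hi).2]
    exact hwseq.1 i (mem_Icc.2 ⟨(mem_Icc.1 hi).1, (mem_Icc.1 hi).2.trans ha.le⟩)
  · by_cases hia : i ≤ a
    · rw [hagree i hia]
      exact hwseq.2 i (by simp only [mem_Icc] at hi ⊢; omega)
    · exact if_neg hia
  · ext i
    rw [mem_Des_iff_of_eqOn ha.le hagree, hwdes, Finset.mem_coe, Finset.mem_coe, mem_erase_sup_iff]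
  · have := hsplit j
    by_cases hj : j ∈ Icc 1 n
    · have := hwmult j hj
      omega
    · have := mult_eq_zero_of_notMem hwseq hj
      omega
  · have hnext : 0 < #{q ∈ Icc 1 (n * m - a) | w (a + q) = w (a + 1)} :=
      card_pos.2 ⟨1, mem_filter.2 ⟨mem_Icc.2 ⟨le_rfl, by omega⟩, rfl⟩⟩
    have := hsplit (w (a + 1))
    have := hwmult _ hwnext
    omega
  · rw [hagree a le_rfl]
    exact hdesc.2.2

lemma card_tail_of_mem_words (hI : I.Nonempty) (hw : w ∈ words m I n) (k : ℕ) :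
    #{q ∈ Icc 1 (n * m - I.sup id) | w (I.sup id + q) = k} = deficit (I.sup id) n m w k := by
  have hsplit := mult_add (v := w) (a := I.sup id) (n * m - I.sup id) k
  rw [Nat.add_sub_cancel' (sup_mem_Des_of_mem_words hI hw).2.1.le] at hsplit
  unfold deficit
  split_ifs with hk
  · have := hw.2.2 k hk
    omega
  · have := mult_eq_zero_of_notMem hw.1 hk
    omega

lemma complete_restrict (hI : I.Nonempty) (hw : w ∈ words m I n) :
    complete (I.sup id) n m (restrict (I.sup id) w) = w := by
  set a := I.sup id
  have ha : a < n * m := (sup_mem_Des_of_mem_words hI hw).2.1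
  have hv := restrict_mem_prefixes hI hw
  have hc : deficit a n m (restrict a w) = deficit a n m w :=
    deficit_congr fun i hi => if_pos (mem_Icc.1 hi).2
  have hT : cumCount (deficit a n m w) n = n * m - a := hc ▸ cumCount_deficit hv.1 hv.2.2.1
  have htail :
      Set.EqOn (sortedEntry (deficit a n m w)) (fun q => w (a + q)) (Icc 1 (n * m - a)) := by
    refine eqOn_of_monotoneOn_of_card_filter_eq (hT ▸ monotoneOn_sortedEntry)
      (fun q hq q' hq' hqq' => monotoneOn_of_mem_words hw ?_ ?_ (by omega)) fun k => ?_
    · simp only [coe_Icc, Set.mem_Icc] at hq ⊢; omega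
    · simp only [coe_Icc, Set.mem_Icc] at hq' ⊢; omega
    · rw [card_tail_of_mem_words hI hw, ← hT, card_filter_sortedEntry_eq fun _ => deficit_eq_zero]
  funext i
  by_cases hia : i ≤ a
  · simp [complete, restrict, hia]
  by_cases hin : i ≤ n * m
  · simp only [complete, hia, hin, if_false, if_true, hc]
    have : sortedEntry (deficit a n m w) (i - a) = w (a + (i - a)) :=
      htail (by simp only [coe_Icc, Set.mem_Icc]; omega)
    rwa [Nat.add_sub_cancel' (by omega : a ≤ i)] at this
  · simp only [complete, hia, hin, if_false]
    exact (hw.1.2 i (by simp only [mem_Icc]; omega)).symm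

lemma exists_lt_one_le_cumCount (hv : v ∈ prefixes m I n) :
    ∃ j < v (I.sup id), 1 ≤ cumCount (deficit (I.sup id) n m v) j := by
  obtain ⟨hvseq, -, -, j, hj1, hjm, hjv⟩ := hv
  have hsup : I.sup id ∈ Icc 1 (I.sup id) := by
    by_contra h
    rw [hvseq.2 _ h] at hjv
    omega
  have hjn : j ∈ Icc 1 n := mem_Icc.2 ⟨hj1, hjv.le.trans (mem_Icc.1 (hvseq.1 _ hsup)).2⟩
  refine ⟨j, hjv, le_trans ?_ (single_le_sum (fun _ _ => Nat.zero_le _) (self_mem_range_succ j))⟩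
  rw [deficit, if_pos hjn]
  omega

lemma lt_mul_of_mem_prefixes (hv : v ∈ prefixes m I n) : I.sup id < n * m := by
  obtain ⟨j, -, hj⟩ := exists_lt_one_le_cumCount hv
  have := cumCount_le_of_support (c := deficit (I.sup id) n m v) (fun _ => deficit_eq_zero) j
  rw [cumCount_deficit hv.1 hv.2.2.1] at this
  omega

lemma sortedEntry_one_lt (hv : v ∈ prefixes m I n) :
    sortedEntry (deficit (I.sup id) n m v) 1 < v (I.sup id) := by
  obtain ⟨j, hjv, hj⟩ := exists_lt_one_le_cumCount hv
  have hjn := hj.trans (cumCount_le_of_support (fun _ => deficit_eq_zero) j)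
  exact ((sortedEntry_le_iff hjn j).2 hj).trans_lt hjv

lemma complete_mem_seqs (hv : v ∈ Seqs a n) (hm : ∀ j, mult a v j ≤ m) (ha : a ≤ n * m) :
    complete a n m v ∈ Seqs (n * m) n := by
  refine ⟨fun i hi => ?_, fun i hi => ?_⟩
  · by_cases hia : i ≤ a
    · rw [complete, if_pos hia]
      exact hv.1 i (mem_Icc.2 ⟨(mem_Icc.1 hi).1, hia⟩)
    · rw [complete_of_lt (not_le.1 hia) (mem_Icc.1 hi).2]
      refine sortedEntry_mem_Icc (fun _ => deficit_eq_zero) ?_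
      rw [cumCount_deficit hv hm]
      simp only [mem_Icc] at hi ⊢
      omega
  · by_cases hia : i ≤ a
    · rw [complete, if_pos hia]
      exact hv.2 i (by simp only [mem_Icc] at hi ⊢; omega)
    · simp only [mem_Icc] at hi
      simp only [complete, hia, if_false, ite_eq_right_iff]
      omega

lemma mult_complete (hv : v ∈ Seqs a n) (hm : ∀ j, mult a v j ≤ m) (ha : a ≤ n * m) {k : ℕ}
    (hk : k ∈ Icc 1 n) : mult (n * m) (complete a n m v) k = m := by
  have hsplit := mult_add (v := complete a n m v) (a := a) (n * m - a) k
  have hhead : mult a (complete a n m v) k = mult a v k :=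
    mult_congr (fun i hi => if_pos (mem_Icc.1 hi).2) k
  have htail : #{q ∈ Icc 1 (n * m - a) | complete a n m v (a + q) = k} = deficit a n m v k := by
    rw [filter_congr fun q hq => by
        rw [complete_of_lt (by simp at hq; omega) (by simp at hq; omega), Nat.add_sub_cancel_left],
      ← cumCount_deficit hv hm, card_filter_sortedEntry_eq fun _ => deficit_eq_zero]
  rw [Nat.add_sub_cancel' ha, hhead, htail, deficit, if_pos hk] at hsplit
  have := hm k
  omega

lemma Des_complete (hI : I.Nonempty) (hv : v ∈ prefixes m I n) :
    Des (n * m) (complete (I.sup id) n m v) = ↑I := by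
  have ha := lt_mul_of_mem_prefixes hv
  have hfirst := sortedEntry_one_lt hv
  obtain ⟨hvseq, hvdes, hvle, -⟩ := hv
  set a := I.sup id
  have hT : cumCount (deficit a n m v) n = n * m - a := cumCount_deficit hvseq hvle
  have hagree : ∀ i ≤ a, v i = complete a n m v i := fun i hi => (if_pos hi).symm
  ext i
  rw [Finset.mem_coe]
  rcases lt_trichotomy i a with hia | rfl | hia
  · have hvi : i ∈ Des a v ↔ i ∈ I := by
      rw [hvdes, Finset.mem_coe, mem_erase_sup_iff, and_iff_left hia]
    rw [← hvi, mem_Des_iff_of_eqOn ha.le hagree, and_iff_left hia]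
  · refine iff_of_true ⟨?_, ha, ?_⟩ (sup_id_mem hI)
    · by_contra h
      rw [hvseq.2 _ (by simp only [mem_Icc]; omega)] at hfirst
      omega
    · rwa [← hagree _ le_rfl, complete_of_lt (by omega) (by omega), Nat.add_sub_cancel_left]
  · refine iff_of_false (fun ⟨_, hin, hdesc⟩ => ?_) fun hiI => ?_
    · have hq : i - a ∈ Icc 1 (cumCount (deficit a n m v) n) := by
        rw [hT]; simp only [mem_Icc]; omega
      have hq' : i + 1 - a ∈ Icc 1 (cumCount (deficit a n m v) n) := by
        rw [hT]; simp only [mem_Icc]; omega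
      rw [complete_of_lt hia hin.le, complete_of_lt (by omega) hin] at hdesc
      exact absurd (monotoneOn_sortedEntry hq hq' (by omega)) hdesc.not_ge
    · exact absurd (le_sup (f := id) hiI) hia.not_ge

lemma complete_mem_words (hI : I.Nonempty) (hv : v ∈ prefixes m I n) :
    complete (I.sup id) n m v ∈ words m I n :=
  have ha := (lt_mul_of_mem_prefixes hv).le
  ⟨complete_mem_seqs hv.1 hv.2.2.1 ha, Des_complete hI hv,
    fun _ hk => mult_complete hv.1 hv.2.2.1 ha hk⟩

lemma prefixes_finite : (prefixes m I n).Finite := (seqs_finite _ n).subset fun _ hv => hv.1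

lemma words_finite : (words m I n).Finite := (seqs_finite _ n).subset fun _ hw => hw.1

lemma prefixes_subset_succ : prefixes m I n ⊆ prefixes (m + 1) I n :=
  fun _ ⟨hvseq, hvdes, hvle, j, hj1, hjm, hjv⟩ =>
    ⟨hvseq, hvdes, fun k => (hvle k).trans m.le_succ, j, hj1, hjm.trans m.lt_succ_self, hjv⟩

theorem dP_eq_ncard_prefixes (hI : I.Nonempty) (m n : ℕ) : dP m I n = (prefixes m I n).ncard := by
  rw [dP_eq_ncard_words]
  refine le_antisymm
    (Set.ncard_le_ncard_of_injOn _ (fun w hw => restrict_mem_prefixes hI hw)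
      (fun w₁ h₁ w₂ h₂ he => ?_) prefixes_finite)
    (Set.ncard_le_ncard_of_injOn _ (fun v hv => complete_mem_words hI hv)
      (fun v₁ h₁ v₂ h₂ he => ?_) words_finite)
  · rw [← complete_restrict hI h₁, he, complete_restrict hI h₂]
  · rw [← restrict_complete h₁.1, he, restrict_complete h₂.1]

end Completion

section Witness

variable {I : Finset ℕ}

/-- The length of the run of consecutive elements of `I` starting at `p`, as in `longestRun`. -/
def runLength (I : Finset ℕ) (p : ℕ) : ℕ := #{q ∈ Icc p (I.sup id) | Icc p q ⊆ I}

lemma runLength_eq_zero {p : ℕ} (hp : p ∉ I) : runLength I p = 0 :=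
  card_eq_zero.2 <| filter_eq_empty_iff.2 fun _ hq hsub =>
    hp (hsub (mem_Icc.2 ⟨le_rfl, (mem_Icc.1 hq).1⟩))

lemma runLength_of_mem {p : ℕ} (hp : p ∈ I) : runLength I p = runLength I (p + 1) + 1 := by
  have hstep : {q ∈ Icc p (I.sup id) | Icc p q ⊆ I} =
      insert p {q ∈ Icc (p + 1) (I.sup id) | Icc (p + 1) q ⊆ I} := by
    ext q
    simp only [mem_filter, mem_insert, mem_Icc]
    constructor
    · rintro ⟨⟨hpq, hq⟩, hsub⟩
      refine or_iff_not_imp_left.2 fun hqp => ⟨⟨by omega, hq⟩, fun x hx => hsub ?_⟩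
      simp only [mem_Icc] at hx ⊢
      omega
    · rintro (rfl | ⟨⟨hpq, hq⟩, hsub⟩)
      · refine ⟨⟨le_rfl, le_sup (f := id) hp⟩, fun x hx => ?_⟩
        rw [Icc_self, mem_singleton] at hx
        rwa [hx]
      · refine ⟨⟨by omega, hq⟩, fun x hx => ?_⟩
        rcases eq_or_ne x p with rfl | hxp
        · exact hp
        · exact hsub (by simp only [mem_Icc] at hx ⊢; omega)
  rw [runLength, hstep, card_insert_of_notMem (by simp), runLength]

lemma runLength_le_longestRun (p : ℕ) : runLength I p ≤ longestRun I := by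
  by_cases hp : p ∈ I
  · exact le_sup (f := fun a => #{b ∈ Icc a (I.sup id) | Icc a b ⊆ I}) hp
  · exact (runLength_eq_zero hp).trans_le (Nat.zero_le _)

lemma add_runLength_notMem (p : ℕ) : p + runLength I p ∉ I := by
  induction hk : runLength I p generalizing p with
  | zero => exact fun hp => absurd (runLength_of_mem (Nat.add_zero p ▸ hp)) (by omega)
  | succ k ih =>
    have hp : p ∈ I := by_contra fun hp => absurd (runLength_eq_zero hp) (by omega)
    have hk' : runLength I (p + 1) = k := by
      have := runLength_of_mem hp
      omega
    rw [show p + (k + 1) = p + 1 + k by omega]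
    exact ih (p + 1) hk'

lemma add_runLength_le {p : ℕ} (hp : p ≤ I.sup id) : p + runLength I p ≤ I.sup id + 1 := by
  have := card_filter_le (Icc p (I.sup id)) fun q => Icc p q ⊆ I
  rw [Nat.card_Icc] at this
  unfold runLength
  omega

def witness (I : Finset ℕ) (p : ℕ) : ℕ := if p ∈ Icc 1 (I.sup id) then 1 + runLength I p else 0

lemma witness_of_mem_Icc {p : ℕ} (hp : p ∈ Icc 1 (I.sup id)) : witness I p = 1 + runLength I p :=
  if_pos hp

lemma witness_mem_seqs {n : ℕ} (hn : longestRun I + 1 ≤ n) : witness I ∈ Seqs (I.sup id) n := by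
  refine ⟨fun p hp => ?_, fun p hp => if_neg hp⟩
  have := runLength_le_longestRun (I := I) p
  rw [witness_of_mem_Icc hp, mem_Icc]
  omega

variable (hIpos : ∀ x ∈ I, 1 ≤ x)
include hIpos

lemma Des_witness : Des (I.sup id) (witness I) = ↑(I.erase (I.sup id)) := by
  ext i
  rw [Finset.mem_coe, mem_erase_sup_iff]
  simp only [Des, Set.mem_ofPred_eq]
  constructor
  · rintro ⟨hi1, hia, hdesc⟩
    rw [witness_of_mem_Icc (mem_Icc.2 ⟨hi1, hia.le⟩),
      witness_of_mem_Icc (p := i + 1) (mem_Icc.2 ⟨by omega, hia⟩)] at hdesc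
    refine ⟨by_contra fun hi => ?_, hia⟩
    rw [runLength_eq_zero hi] at hdesc
    omega
  · rintro ⟨hi, hia⟩
    refine ⟨hIpos i hi, hia, ?_⟩
    rw [witness_of_mem_Icc (mem_Icc.2 ⟨hIpos i hi, hia.le⟩),
      witness_of_mem_Icc (p := i + 1) (mem_Icc.2 ⟨by omega, hia⟩), runLength_of_mem hi]
    omega

lemma witness_sup (hI : I.Nonempty) : witness I (I.sup id) = 2 := by
  have hA := sup_id_mem hI
  rw [witness_of_mem_Icc (mem_Icc.2 ⟨hIpos _ hA, le_rfl⟩), runLength_of_mem hA,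
    runLength_eq_zero fun h => (le_sup (f := id) h).not_gt (Nat.lt_succ_self _)]

lemma card_Icc_sdiff : #(Icc 1 (I.sup id) \ I) = I.sup id - #I := by
  rw [card_sdiff_of_subset fun x hx => mem_Icc.2 ⟨hIpos x hx, le_sup (f := id) hx⟩, Nat.card_Icc,
    Nat.add_sub_cancel]

lemma mult_witness_one : mult (I.sup id) (witness I) 1 = I.sup id - #I := by
  rw [mult, ← card_Icc_sdiff hIpos, sdiff_eq_filter]
  refine congrArg card (filter_congr fun p hp => ?_)
  rw [witness_of_mem_Icc hp]
  refine ⟨fun h hpI => ?_, fun hpI => by rw [runLength_eq_zero hpI]⟩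
  rw [runLength_of_mem hpI] at h
  omega

/-- `p ↦ p + runLength I p` sends the positions where `witness I` takes a given value injectively
to the non-elements of `I` in `[1, α_t + 1]`. -/
lemma mult_witness_le (j : ℕ) : mult (I.sup id) (witness I) j ≤ I.sup id - #I + 1 := by
  set A := I.sup id
  calc mult A (witness I) j ≤ #((Icc 1 A \ I) ∪ {A + 1}) := by
        refine card_le_card_of_injOn (fun p => p + runLength I p) (fun p hp => ?_)
          fun p hp q hq h => ?_
        · obtain ⟨hpA, -⟩ := mem_filter.1 hp
          have hle := add_runLength_le (mem_Icc.1 hpA).2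
          have := add_runLength_notMem (I := I) p
          simp only [coe_union, coe_sdiff, coe_singleton, Set.mem_union, Set.mem_sdiff,
            Set.mem_singleton_iff, Finset.mem_coe, mem_Icc] at hpA ⊢
          exact (eq_or_lt_of_le hle).symm.imp (fun h => ⟨⟨by omega, by omega⟩, this⟩) id
        · obtain ⟨hpA, hpj⟩ := mem_filter.1 hp
          obtain ⟨hqA, hqj⟩ := mem_filter.1 hq
          rw [witness_of_mem_Icc hpA] at hpj
          rw [witness_of_mem_Icc hqA] at hqj
          simp only at h
          omega
    _ ≤ #(Icc 1 A \ I) + 1 := card_union_le _ _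
    _ = A - #I + 1 := by rw [card_Icc_sdiff hIpos]

lemma witness_mem_prefixes (hI : I.Nonempty) {n : ℕ} (hn : longestRun I + 1 ≤ n) :
    witness I ∈ prefixes (I.sup id - #I + 1) I n :=
  ⟨witness_mem_seqs hn, Des_witness hIpos, mult_witness_le hIpos, 1, le_rfl,
    by rw [mult_witness_one hIpos]; omega, by rw [witness_sup hIpos hI]; omega⟩

lemma witness_notMem_prefixes (hI : I.Nonempty) {n : ℕ} :
    witness I ∉ prefixes (I.sup id - #I) I n := by
  rintro ⟨-, -, -, j, hj1, hjm, hjv⟩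
  rw [witness_sup hIpos hI] at hjv
  obtain rfl : j = 1 := by omega
  rw [mult_witness_one hIpos] at hjm
  exact lt_irrefl _ hjm

end Witness

end DescentCount

open DescentCount

theorem stmt_3_general (I : Finset ℕ) (hI : I.Nonempty) (hIpos : ∀ x ∈ I, 1 ≤ x)
    (n : ℕ) (hn : longestRun I + 1 ≤ n) :
    dP (I.sup id - I.card) I n < dP (I.sup id - I.card + 1) I n := by
  rw [dP_eq_ncard_prefixes hI, dP_eq_ncard_prefixes hI]
  exact Set.ncard_lt_ncard ⟨prefixes_subset_succ, fun h =>
    witness_notMem_prefixes hIpos hI (h (witness_mem_prefixes hIpos hI hn))⟩ prefixes_finite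

/-- if `α_t - t ≥ 1` and `n ≥ L + 1`, then
`𝔡^{α_t - t}(I,n) < 𝔡^{α_t - t + 1}(I,n)`. -/
theorem stmt_3 (I : Finset ℕ) (hI : I.Nonempty) (hIpos : ∀ x ∈ I, 1 ≤ x)
    (hgap : 1 ≤ I.sup id - I.card) (n : ℕ) (hn : longestRun I + 1 ≤ n) :
    dP (I.sup id - I.card) I n < dP (I.sup id - I.card + 1) I n :=
  stmt_3_general I hI hIpos n hn
end

section
/- For all positive integers n and m, D^m(I,n) = Σ_{A ∈ Comp(α_t, m)} C(A,I) · C(n, r(A)), where Comp(α_t, m) is the set of compositions of α_t all of whose parts are at most m, r(A) is the length of the composition A, C(n, r) is the binomial coefficient, and for A = (a_1,…,a_r), C(A,I) is the number of sequences v = (v_1,…,v_{α_t}) with entries in {1,…,r} such that Des(v) = I \ {α_t} and, for each j ∈ {1,…,r}, the number j appears exactly a_j times in v. -/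
open Finset

/-! A sequence `v` with value set `S` is determined by `S` together with its standardization,
the sequence of ranks in `S` of its entries. Relabelling the values through an order-preserving
bijection keeps the descent set and transports the multiplicities, so `v ↦ (S, std v)` identifies
the sequences counted by `D^m(I, n)` whose multiplicities, listed by increasing value, form the
composition `A` with the pairs (an `r(A)`-subset of `{1,…,n}`, a sequence counted by `C(A, I)`).
Summing over the compositions `A` with parts at most `m` gives the formula. -/

namespace DescentCount

section Rank

variable {S : Finset ℕ}

def rankIn (S : Finset ℕ) (x : ℕ) : ℕ := #{y ∈ S | y ≤ x}

lemma rankIn_lt_rankIn {x y : ℕ} (hy : y ∈ S) (hxy : x < y) : rankIn S x < rankIn S y :=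
  card_lt_card <| (ssubset_iff_of_subset (monotone_filter_right S fun _ _ h => h.trans hxy.le)).2
    ⟨y, by simp [hy], by simp [hxy]⟩

lemma strictMonoOn_rankIn : StrictMonoOn (rankIn S) S :=
  fun _ _ _ hy hxy => rankIn_lt_rankIn hy hxy

lemma bijOn_rankIn : Set.BijOn (rankIn S) S (Icc 1 #S) := by
  have hmaps : Set.MapsTo (rankIn S) S (Icc 1 #S) := fun x hx => by
    simp only [coe_Icc, Set.mem_Icc, rankIn]
    exact ⟨card_pos.2 ⟨x, by simpa using hx⟩, card_filter_le _ _⟩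
  have hinj := strictMonoOn_rankIn (S := S).injOn
  exact ⟨hmaps, hinj, by simpa using surjOn_of_injOn_of_card_le _ hmaps hinj (by simp)⟩

noncomputable def unrankIn (S : Finset ℕ) : ℕ → ℕ := Function.invFunOn (rankIn S) S

lemma invOn_unrankIn : Set.InvOn (unrankIn S) (rankIn S) S (Icc 1 #S) :=
  bijOn_rankIn.invOn_invFunOn

lemma bijOn_unrankIn : Set.BijOn (unrankIn S) (Icc 1 #S) S :=
  bijOn_rankIn.symm invOn_unrankIn.symm

lemma strictMonoOn_unrankIn : StrictMonoOn (unrankIn S) (Icc 1 #S) := by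
  intro a ha b hb hab
  rw [← strictMonoOn_rankIn.lt_iff_lt (bijOn_unrankIn.mapsTo ha) (bijOn_unrankIn.mapsTo hb),
    invOn_unrankIn.2 ha, invOn_unrankIn.2 hb]
  exact hab

end Rank

section Relabel

variable {ℓ k : ℕ} {f g v : ℕ → ℕ} {s : Set ℕ}

def relabel (ℓ : ℕ) (f v : ℕ → ℕ) : ℕ → ℕ := fun i => if i ∈ Icc 1 ℓ then f (v i) else 0

def vals (ℓ : ℕ) (v : ℕ → ℕ) : Finset ℕ := (Icc 1 ℓ).image v

lemma mem_vals {i : ℕ} (hi : i ∈ Icc 1 ℓ) : v i ∈ vals ℓ v := mem_image_of_mem v hi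

lemma vals_subset_Icc {n : ℕ} (hv : v ∈ Seqs ℓ n) : vals ℓ v ⊆ Icc 1 n := by
  simpa [vals, image_subset_iff] using hv.1

lemma mult_pos_iff {x : ℕ} : 0 < mult ℓ v x ↔ x ∈ vals ℓ v := by
  simp [mult, vals, card_pos, Finset.Nonempty]

lemma relabel_mem_Seqs (hf : Set.MapsTo f s (Icc 1 k)) (hv : ∀ i ∈ Icc 1 ℓ, v i ∈ s) :
    relabel ℓ f v ∈ Seqs ℓ k :=
  ⟨fun i hi => by simpa [relabel, hi] using hf (hv i hi), fun i hi => if_neg hi⟩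

lemma Des_relabel (hf : StrictMonoOn f s) (hv : ∀ i ∈ Icc 1 ℓ, v i ∈ s) :
    Des ℓ (relabel ℓ f v) = Des ℓ v := by
  ext i
  refine and_congr_right fun h1 => and_congr_right fun h2 => ?_
  have hi : i ∈ Icc 1 ℓ := mem_Icc.2 ⟨h1, h2.le⟩
  have hi1 : i + 1 ∈ Icc 1 ℓ := mem_Icc.2 ⟨by omega, h2⟩
  simp only [relabel, hi, hi1, if_true]
  exact hf.lt_iff_lt (hv _ hi1) (hv _ hi)

lemma mult_relabel (hf : Set.InjOn f s) (hv : ∀ i ∈ Icc 1 ℓ, v i ∈ s) {x : ℕ} (hx : x ∈ s) :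
    mult ℓ (relabel ℓ f v) (f x) = mult ℓ v x := by
  refine congrArg card (filter_congr fun i hi => ?_)
  simp only [relabel, hi, if_true]
  exact hf.eq_iff (hv i hi) hx

lemma vals_relabel : vals ℓ (relabel ℓ f v) = (vals ℓ v).image f := by
  rw [vals, vals, image_image]
  exact image_congr fun i hi => by simp [relabel, mem_coe.1 hi]

lemma relabel_relabel (hgf : Set.LeftInvOn g f s) (hv : ∀ i ∈ Icc 1 ℓ, v i ∈ s)
    (hv0 : ∀ i ∉ Icc 1 ℓ, v i = 0) : relabel ℓ g (relabel ℓ f v) = v := by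
  funext i
  by_cases hi : i ∈ Icc 1 ℓ
  · simp [relabel, hi, hgf (hv i hi)]
  · simp [relabel, hi, hv0 i hi]

end Relabel

section Standardize

variable {ℓ : ℕ} {v : ℕ → ℕ}

def standardize (ℓ : ℕ) (v : ℕ → ℕ) : ℕ → ℕ := relabel ℓ (rankIn (vals ℓ v)) v

lemma standardize_mem_Seqs : standardize ℓ v ∈ Seqs ℓ #(vals ℓ v) :=
  relabel_mem_Seqs bijOn_rankIn.mapsTo fun _ => mem_vals

lemma Des_standardize : Des ℓ (standardize ℓ v) = Des ℓ v :=
  Des_relabel strictMonoOn_rankIn fun _ => mem_vals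

lemma vals_standardize : vals ℓ (standardize ℓ v) = Icc 1 #(vals ℓ v) := by
  rw [standardize, vals_relabel, ← coe_inj, coe_image, bijOn_rankIn.image_eq]

lemma mult_standardize_rankIn {x : ℕ} (hx : x ∈ vals ℓ v) :
    mult ℓ (standardize ℓ v) (rankIn (vals ℓ v) x) = mult ℓ v x :=
  mult_relabel strictMonoOn_rankIn.injOn (fun _ => mem_vals) hx

lemma relabel_unrankIn_standardize (hv : ∀ i ∉ Icc 1 ℓ, v i = 0) :
    relabel ℓ (unrankIn (vals ℓ v)) (standardize ℓ v) = v :=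
  relabel_relabel invOn_unrankIn.1 (fun _ => mem_vals) hv

end Standardize

section Content

variable {ℓ r : ℕ} {w : ℕ → ℕ}

def content (ℓ r : ℕ) (w : ℕ → ℕ) : List ℕ := (List.range' 1 r).map (mult ℓ w)

lemma forall_mem_content {p : ℕ → Prop} :
    (∀ a ∈ content ℓ r w, p a) ↔ ∀ j ∈ Icc 1 r, p (mult ℓ w j) := by
  simp only [content, List.forall_mem_map, List.mem_range'_1, mem_Icc]
  exact forall_congr' fun j => ⟨fun h hj => h ⟨hj.1, by omega⟩, fun h hj => h ⟨hj.1, by omega⟩⟩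

lemma sum_content (hw : w ∈ Seqs ℓ r) : (content ℓ r w).sum = ℓ := by
  have hsum : (content ℓ r w).sum = ∑ j ∈ Icc 1 r, mult ℓ w j := by
    rw [content, sum_eq_multiset_sum, Nat.Icc_eq_range']
    simp
  rw [hsum]
  unfold mult
  rw [← card_eq_sum_card_fiberwise fun i hi => hw.1 i hi, Nat.card_Icc, Nat.add_sub_cancel]

lemma content_eq_iff {L : List ℕ} (hL : L.length = r) :
    content ℓ r w = L ↔ ∀ j ∈ Icc 1 r, mult ℓ w j = L.getD (j - 1) 0 := by
  constructor
  · rintro rfl j hj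
    have hj' := mem_Icc.1 hj
    rw [List.getD_eq_getElem _ _ (by simp [content]; omega)]
    simp only [content, List.getElem_map, List.getElem_range']
    congr 1
    omega
  · intro h
    refine List.ext_getElem (by simp [content, hL]) fun i hi hiL => ?_
    have := h (i + 1) (mem_Icc.2 ⟨by omega, by omega⟩)
    rw [Nat.add_sub_cancel, List.getD_eq_getElem _ _ hiL] at this
    simp [content, ← this, add_comm]

lemma vals_eq_Icc (hw : w ∈ Seqs ℓ r) (hpos : ∀ a ∈ content ℓ r w, 0 < a) :
    vals ℓ w = Icc 1 r :=
  (vals_subset_Icc hw).antisymm fun j hj => mult_pos_iff.1 <| forall_mem_content.1 hpos j hj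

lemma standardize_relabel_unrankIn {S : Finset ℕ} (hS : #S = r) (hw : w ∈ Seqs ℓ r)
    (hpos : ∀ a ∈ content ℓ r w, 0 < a) :
    vals ℓ (relabel ℓ (unrankIn S) w) = S ∧ standardize ℓ (relabel ℓ (unrankIn S) w) = w := by
  subst hS
  have hS : vals ℓ (relabel ℓ (unrankIn S) w) = S := by
    rw [vals_relabel, vals_eq_Icc hw hpos, ← coe_inj, coe_image, bijOn_unrankIn.image_eq]
  exact ⟨hS, by rw [standardize, hS]; exact relabel_relabel invOn_unrankIn.2 hw.1 hw.2⟩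

end Content

section MultComposition

variable {ℓ n : ℕ} {v w : ℕ → ℕ}

def multComposition (ℓ : ℕ) (v : ℕ → ℕ) : Composition ℓ where
  blocks := content ℓ #(vals ℓ v) (standardize ℓ v)
  blocks_pos hi := (forall_mem_content (p := (0 < ·))).2
    (fun _ hj => mult_pos_iff.2 (vals_standardize ▸ hj)) _ hi
  blocks_sum := sum_content standardize_mem_Seqs

lemma length_multComposition : (multComposition ℓ v).length = #(vals ℓ v) := by
  simp [Composition.length, multComposition, content]

lemma forall_mem_blocks_multComposition {p : ℕ → Prop} :
    (∀ a ∈ (multComposition ℓ v).blocks, p a) ↔ ∀ x ∈ vals ℓ v, p (mult ℓ v x) := by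
  have hvals : vals ℓ (standardize ℓ v) = (vals ℓ v).image (rankIn (vals ℓ v)) := vals_relabel
  change (∀ a ∈ content ℓ #(vals ℓ v) (standardize ℓ v), p a) ↔ _
  rw [forall_mem_content, ← vals_standardize, hvals, forall_mem_image]
  exact forall₂_congr fun x hx => by rw [mult_standardize_rankIn hx]

lemma forall_mult_le_iff (hv : v ∈ Seqs ℓ n) {m : ℕ} :
    (∀ j ∈ Icc 1 n, mult ℓ v j ≤ m) ↔ ∀ a ∈ (multComposition ℓ v).blocks, a ≤ m := by
  rw [forall_mem_blocks_multComposition]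
  refine ⟨fun h x hx => h x (vals_subset_Icc hv hx), fun h j _ => ?_⟩
  by_cases hj : j ∈ vals ℓ v
  · exact h j hj
  · rw [Nat.eq_zero_of_not_pos (mt mult_pos_iff.1 hj)]
    exact Nat.zero_le m

end MultComposition
section Counting

variable {ℓ n : ℕ}

open Classical in
noncomputable def seqsFinset (ℓ n : ℕ) : Finset (ℕ → ℕ) :=
  ((Icc 1 ℓ).pi fun _ => Icc 1 n).image fun g i => if h : i ∈ Icc 1 ℓ then g i h else 0

lemma mem_seqsFinset {v : ℕ → ℕ} : v ∈ seqsFinset ℓ n ↔ v ∈ Seqs ℓ n := by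
  classical
  constructor
  · simp only [seqsFinset, mem_image, mem_pi]
    rintro ⟨g, hg, rfl⟩
    exact ⟨fun i hi => by simpa [hi] using hg i hi, fun i hi => dif_neg hi⟩
  · rintro ⟨h1, h2⟩
    refine mem_image.2 ⟨fun i _ => v i, mem_pi.2 h1, funext fun i => ?_⟩
    by_cases hi : i ∈ Icc 1 ℓ
    · simp [hi]
    · simp [hi, h2 i hi]

lemma ncard_sep_Seqs (P : (ℕ → ℕ) → Prop) [DecidablePred P] :
    {v ∈ Seqs ℓ n | P v}.ncard = #{v ∈ seqsFinset ℓ n | P v} := by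
  rw [← Set.ncard_coe_finset, coe_filter]
  simp only [mem_seqsFinset]

open Classical in
lemma card_fiber_multComposition (A : Composition ℓ) (J : Set ℕ) :
    #{v ∈ seqsFinset ℓ n | Des ℓ v = J ∧ multComposition ℓ v = A} =
      #(powersetCard A.length (Icc 1 n) ×ˢ
        {w ∈ seqsFinset ℓ A.length | Des ℓ w = J ∧ content ℓ A.length w = A.blocks}) := by
  refine card_nbij' (fun v => (vals ℓ v, standardize ℓ v))
    (fun p => relabel ℓ (unrankIn p.1) p.2) ?_ ?_ ?_ ?_
  · rintro v hv
    simp only [coe_filter, mem_seqsFinset, Set.mem_ofPred_eq] at hv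
    obtain ⟨hv, hDes, rfl⟩ := hv
    simp only [coe_product, coe_filter, Set.mem_prod, mem_coe, mem_powersetCard, Set.mem_ofPred_eq,
      mem_seqsFinset, length_multComposition]
    exact ⟨⟨vals_subset_Icc hv, trivial⟩, standardize_mem_Seqs, Des_standardize.trans hDes, rfl⟩
  · rintro ⟨S, w⟩ h
    simp only [coe_product, coe_filter, Set.mem_prod, mem_coe, mem_powersetCard, Set.mem_ofPred_eq,
      mem_seqsFinset] at h
    obtain ⟨⟨hSn, hS⟩, hw, hDes, hcont⟩ := h
    obtain ⟨hvals, hstd⟩ :=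
      standardize_relabel_unrankIn hS hw fun _ ha => A.blocks_pos (hcont ▸ ha)
    rw [← hS] at hw hcont
    simp only [coe_filter, mem_seqsFinset, Set.mem_ofPred_eq]
    refine ⟨relabel_mem_Seqs (bijOn_unrankIn.mapsTo.mono_right (coe_subset.2 hSn)) hw.1,
      (Des_relabel strictMonoOn_unrankIn hw.1).trans hDes, Composition.ext ?_⟩
    change content ℓ _ (standardize ℓ _) = _
    rw [hvals, hstd, hcont]
  · intro v hv
    simp only [coe_filter, mem_seqsFinset, Set.mem_ofPred_eq] at hv
    exact relabel_unrankIn_standardize hv.1.2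
  · rintro ⟨S, w⟩ h
    simp only [coe_product, coe_filter, Set.mem_prod, mem_coe, mem_powersetCard, Set.mem_ofPred_eq,
      mem_seqsFinset] at h
    obtain ⟨⟨-, hS⟩, hw, -, hcont⟩ := h
    obtain ⟨hvals, hstd⟩ :=
      standardize_relabel_unrankIn hS hw fun _ ha => A.blocks_pos (hcont ▸ ha)
    exact Prod.ext hvals hstd

end Counting

theorem ncard_Seqs_mult_le_eq_sum (ℓ n m : ℕ) (J : Set ℕ) :
    {v ∈ Seqs ℓ n | Des ℓ v = J ∧ ∀ j ∈ Icc 1 n, mult ℓ v j ≤ m}.ncard =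
      ∑ A ∈ univ.filter (fun A : Composition ℓ => ∀ a ∈ A.blocks, a ≤ m),
        {w ∈ Seqs ℓ A.length | Des ℓ w = J ∧
          ∀ j ∈ Icc 1 A.length, mult ℓ w j = A.blocks.getD (j - 1) 0}.ncard *
        n.choose A.length := by
  classical
  rw [ncard_sep_Seqs, filter_congr fun v hv =>
    and_congr_right' (forall_mult_le_iff (mem_seqsFinset.1 hv)),
    card_eq_sum_card_fiberwise (f := multComposition ℓ)
      (t := univ.filter fun A : Composition ℓ => ∀ a ∈ A.blocks, a ≤ m)
      fun v hv => by simpa using (mem_filter.1 hv).2.2]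
  refine sum_congr rfl fun A hA => ?_
  have hA : ∀ a ∈ A.blocks, a ≤ m := (mem_filter.1 hA).2
  rw [filter_filter, filter_congr fun v _ =>
      and_assoc.trans (and_congr_right fun _ => and_iff_right_of_imp fun h => h ▸ hA),
    card_fiber_multComposition, card_product, card_powersetCard, Nat.card_Icc, Nat.add_sub_cancel,
    mul_comm, ncard_sep_Seqs,
    filter_congr fun w _ => and_congr_right' (content_eq_iff A.blocks_length).symm]

end DescentCount

theorem stmt_4_general (I : Finset ℕ) (n m : ℕ) :
    Dcount m I n =
      ∑ A ∈ Finset.univ.filter (fun A : Composition (I.sup id) => ∀ a ∈ A.blocks, a ≤ m),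
        Ccount I A * n.choose A.length :=
  DescentCount.ncard_Seqs_mult_le_eq_sum _ _ _ _

/-- `D^m(I,n) = Σ_{A ∈ Comp(α_t, m)} C(A,I) · C(n, r(A))`, summing over
compositions of `α_t` all of whose parts are at most `m`. -/
theorem stmt_4 (I : Finset ℕ) (hI : I.Nonempty) (hIpos : ∀ x ∈ I, 1 ≤ x)
    (n m : ℕ) (hn : 1 ≤ n) (hm : 1 ≤ m) :
    Dcount m I n =
      ∑ A ∈ Finset.univ.filter (fun A : Composition (I.sup id) => ∀ a ∈ A.blocks, a ≤ m),
        Ccount I A * n.choose A.length :=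
  stmt_4_general I n m
end

section
/- For every positive integer m, there exists a polynomial p with rational coefficients such that D^m(I,n) = p(n) for every integer n ≥ α_t. -/
open Finset

/-! Sort the sequences counted by `D^m(I, n)` by their set of values `T ⊆ {1, …, n}`.
Relabelling along the order isomorphism `T ≃o {1, …, #T}` preserves descents and
multiplicities, so the fibre over `T` has a size `c_k` depending only on `k = #T`; and `c_k = 0`
for `k > α_t`, since a sequence of length `α_t` takes at most `α_t` values. Hence
`D^m(I, n) = ∑_{k ≤ α_t} C(n, k) c_k`, a polynomial in `n`. -/

section DescentSequences

attribute [local instance 10] Classical.propDecidable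

variable {ℓ m : ℕ} {J : Set ℕ}

noncomputable def seqsIn (ℓ : ℕ) (S : Finset ℕ) : Finset (ℕ → ℕ) :=
  ((Icc 1 ℓ).pi fun _ => S).image fun f i => if h : i ∈ Icc 1 ℓ then f i h else 0

lemma mem_seqsIn {S : Finset ℕ} {w : ℕ → ℕ} :
    w ∈ seqsIn ℓ S ↔ (∀ i ∈ Icc 1 ℓ, w i ∈ S) ∧ ∀ i, i ∉ Icc 1 ℓ → w i = 0 := by
  constructor
  · intro hw
    obtain ⟨f, hf, rfl⟩ := mem_image.1 hw
    exact ⟨fun i hi => by simpa [hi] using mem_pi.1 hf i hi, fun i hi => by simp [hi]⟩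
  · rintro ⟨hS, hzero⟩
    refine mem_image.2 ⟨fun i _ => w i, mem_pi.2 hS, funext fun i => ?_⟩
    by_cases hi : i ∈ Icc 1 ℓ
    · simp [hi]
    · simp [hi, hzero i hi]

lemma mem_seqsIn_Icc {n : ℕ} {w : ℕ → ℕ} : w ∈ seqsIn ℓ (Icc 1 n) ↔ w ∈ Seqs ℓ n :=
  mem_seqsIn

noncomputable def descSeqs (ℓ : ℕ) (J : Set ℕ) (m : ℕ) (S : Finset ℕ) : Finset (ℕ → ℕ) :=
  (seqsIn ℓ S).filter fun w => Des ℓ w = J ∧ ∀ i ∈ Icc 1 ℓ, mult ℓ w (w i) ≤ m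

noncomputable def descSeqsOnto (ℓ : ℕ) (J : Set ℕ) (m : ℕ) (S : Finset ℕ) :
    Finset (ℕ → ℕ) :=
  (descSeqs ℓ J m S).filter fun w => (Icc 1 ℓ).image w = S

lemma mem_descSeqs {S : Finset ℕ} {w : ℕ → ℕ} :
    w ∈ descSeqs ℓ J m S ↔
      w ∈ seqsIn ℓ S ∧ Des ℓ w = J ∧ ∀ i ∈ Icc 1 ℓ, mult ℓ w (w i) ≤ m := by
  simp only [descSeqs, mem_filter]

lemma mem_descSeqsOnto {S : Finset ℕ} {w : ℕ → ℕ} :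
    w ∈ descSeqsOnto ℓ J m S ↔ w ∈ descSeqs ℓ J m S ∧ (Icc 1 ℓ).image w = S := by
  simp only [descSeqsOnto, mem_filter]

lemma descSeqsOnto_subset_seqsIn (S : Finset ℕ) : descSeqsOnto ℓ J m S ⊆ seqsIn ℓ S :=
  fun _ hw => (mem_descSeqs.1 (mem_descSeqsOnto.1 hw).1).1

lemma forall_mult_le_iff {S : Finset ℕ} {w : ℕ → ℕ} (hw : w ∈ seqsIn ℓ S) :
    (∀ j ∈ S, mult ℓ w j ≤ m) ↔ ∀ i ∈ Icc 1 ℓ, mult ℓ w (w i) ≤ m := by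
  refine ⟨fun h i hi => h _ ((mem_seqsIn.1 hw).1 i hi), fun h j _ => ?_⟩
  obtain hzero | ⟨i, hi⟩ := (filter (fun i => w i = j) (Icc 1 ℓ)).eq_empty_or_nonempty
  · simp [mult, hzero]
  · obtain ⟨hi', rfl⟩ := mem_filter.1 hi
    exact h i hi'

lemma ncard_eq_card_descSeqs (n : ℕ) :
    {v ∈ Seqs ℓ n | Des ℓ v = J ∧ ∀ j ∈ Icc 1 n, mult ℓ v j ≤ m}.ncard
      = #(descSeqs ℓ J m (Icc 1 n)) := by
  rw [← Set.ncard_coe_finset]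
  congr 1
  ext v
  rw [Set.mem_sep_iff, mem_coe, mem_descSeqs, mem_seqsIn_Icc]
  exact and_congr_right fun hv => and_congr_right fun _ =>
    forall_mult_le_iff (mem_seqsIn_Icc.2 hv)

def relabel (g : ℕ → ℕ) (ℓ : ℕ) (w : ℕ → ℕ) : ℕ → ℕ :=
  fun i => if i ∈ Icc 1 ℓ then g (w i) else 0

section Relabel

variable {g g' : ℕ → ℕ} {S T : Finset ℕ} {w : ℕ → ℕ}

lemma relabel_mem_seqsIn (hg : Set.MapsTo g S T) (hw : w ∈ seqsIn ℓ S) :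
    relabel g ℓ w ∈ seqsIn ℓ T :=
  mem_seqsIn.2 ⟨fun i hi => by simpa [relabel, hi] using hg ((mem_seqsIn.1 hw).1 i hi),
    fun i hi => by simp [relabel, hi]⟩

lemma relabel_relabel (h : Set.LeftInvOn g' g S) (hw : w ∈ seqsIn ℓ S) :
    relabel g' ℓ (relabel g ℓ w) = w := by
  funext i
  by_cases hi : i ∈ Icc 1 ℓ
  · simp only [relabel, if_pos hi]
    exact h ((mem_seqsIn.1 hw).1 i hi)
  · simp [relabel, hi, (mem_seqsIn.1 hw).2 i hi]

lemma image_relabel : (Icc 1 ℓ).image (relabel g ℓ w) = ((Icc 1 ℓ).image w).image g := by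
  rw [image_image]
  exact image_congr fun i hi => by simp [relabel, mem_coe.1 hi]

lemma des_relabel (hg : StrictMonoOn g S) (hw : w ∈ seqsIn ℓ S) :
    Des ℓ (relabel g ℓ w) = Des ℓ w := by
  ext i
  simp only [Des, Set.mem_ofPred_eq, and_congr_right_iff]
  intro h1 h2
  have hi : i ∈ Icc 1 ℓ := mem_Icc.2 ⟨h1, h2.le⟩
  have hi' : i + 1 ∈ Icc 1 ℓ := mem_Icc.2 ⟨by omega, h2⟩
  simp only [relabel, if_pos hi, if_pos hi']
  exact hg.lt_iff_lt ((mem_seqsIn.1 hw).1 _ hi') ((mem_seqsIn.1 hw).1 _ hi)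

lemma mult_relabel (hg : Set.InjOn g S) (hw : w ∈ seqsIn ℓ S) {i : ℕ} (hi : i ∈ Icc 1 ℓ) :
    mult ℓ (relabel g ℓ w) (relabel g ℓ w i) = mult ℓ w (w i) := by
  unfold mult
  congr 1
  refine filter_congr fun k hk => ?_
  simp only [relabel, if_pos hk, if_pos hi]
  exact hg.eq_iff ((mem_seqsIn.1 hw).1 k hk) ((mem_seqsIn.1 hw).1 i hi)

lemma relabel_mem_descSeqsOnto_iff (hg : StrictMonoOn g S) (hST : Set.BijOn g S T)
    (hw : w ∈ seqsIn ℓ S) :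
    relabel g ℓ w ∈ descSeqsOnto ℓ J m T ↔ w ∈ descSeqsOnto ℓ J m S := by
  have hvalues : (Icc 1 ℓ).image w ⊆ S := image_subset_iff.2 (mem_seqsIn.1 hw).1
  have himage : ((Icc 1 ℓ).image w).image g = T ↔ (Icc 1 ℓ).image w = S := by
    rw [← coe_inj, ← coe_inj, coe_image, ← hST.image_eq]
    exact hST.injOn.image_eq_image_iff hvalues subset_rfl
  simp only [mem_descSeqsOnto, mem_descSeqs, relabel_mem_seqsIn hST.mapsTo hw, hw,
    des_relabel hg hw, image_relabel, himage, true_and]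
  rw [forall₂_congr fun i hi => by rw [mult_relabel hST.injOn hw hi]]

lemma card_descSeqsOnto_eq_of_bijOn (hg : StrictMonoOn g S) (hST : Set.BijOn g S T) :
    #(descSeqsOnto ℓ J m S) = #(descSeqsOnto ℓ J m T) := by
  have hinv := hST.invOn_invFunOn
  have hmaps : Set.MapsTo (Function.invFunOn g S) T S := hST.surjOn.mapsTo_invFunOn
  have hseqs := descSeqsOnto_subset_seqsIn (ℓ := ℓ) (J := J) (m := m)
  refine card_nbij' (relabel g ℓ) (relabel (Function.invFunOn g S) ℓ)
    (fun w hw => (relabel_mem_descSeqsOnto_iff hg hST (hseqs S hw)).2 hw)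
    (fun v hv => ?_) (fun w hw => relabel_relabel hinv.1 (hseqs S hw))
    (fun v hv => relabel_relabel hinv.2 (hseqs T hv))
  have hv' := relabel_mem_seqsIn hmaps (hseqs T hv)
  refine (relabel_mem_descSeqsOnto_iff hg hST hv').1 ?_
  rwa [relabel_relabel hinv.2 (hseqs T hv)]

end Relabel

/-- The witness is the rank `x ↦ #{y ∈ S | y ≤ x}`. -/
lemma exists_strictMonoOn_bijOn_Icc (S : Finset ℕ) :
    ∃ g : ℕ → ℕ, StrictMonoOn g S ∧ Set.BijOn g S (Icc 1 #S) := by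
  set g : ℕ → ℕ := fun x => #{y ∈ S | y ≤ x}
  have hmono : StrictMonoOn g S := by
    intro a _ b hb hab
    refine card_lt_card ((ssubset_iff_of_subset ?_).2 ⟨b, ?_, ?_⟩)
    · intro y
      simp only [mem_filter]
      exact fun hy => ⟨hy.1, hy.2.trans hab.le⟩
    · simpa using hb
    · simp [hab]
  have hmaps : Set.MapsTo g S (Icc 1 #S) := fun x hx =>
    mem_Icc.2 ⟨card_pos.2 ⟨x, by simp [mem_coe.1 hx]⟩, card_filter_le _ _⟩
  exact ⟨g, hmono, hmaps, hmono.injOn,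
    surjOn_of_injOn_of_card_le g hmaps hmono.injOn (by simp)⟩

lemma card_descSeqsOnto_eq_Icc (S : Finset ℕ) :
    #(descSeqsOnto ℓ J m S) = #(descSeqsOnto ℓ J m (Icc 1 #S)) := by
  obtain ⟨g, hg, hST⟩ := exists_strictMonoOn_bijOn_Icc S
  exact card_descSeqsOnto_eq_of_bijOn hg hST

lemma descSeqsOnto_Icc_eq_empty {k : ℕ} (hk : ℓ < k) : descSeqsOnto ℓ J m (Icc 1 k) = ∅ := by
  refine eq_empty_of_forall_notMem fun w hw => ?_
  have hcard := card_image_le (s := Icc 1 ℓ) (f := w)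
  rw [(mem_descSeqsOnto.1 hw).2, Nat.card_Icc, Nat.card_Icc] at hcard
  omega

lemma descSeqs_filter_image_eq {S T : Finset ℕ} (hT : T ⊆ S) :
    (descSeqs ℓ J m S).filter (fun w => (Icc 1 ℓ).image w = T) = descSeqsOnto ℓ J m T := by
  ext w
  rw [mem_filter, mem_descSeqsOnto, mem_descSeqs, mem_descSeqs, and_congr_left_iff]
  rintro rfl
  have hvalues : ∀ i ∈ Icc 1 ℓ, w i ∈ (Icc 1 ℓ).image w := fun i hi => mem_image_of_mem w hi
  simp only [mem_seqsIn]
  exact ⟨fun h => ⟨⟨hvalues, h.1.2⟩, h.2⟩,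
    fun h => ⟨⟨fun i hi => hT (hvalues i hi), h.1.2⟩, h.2⟩⟩

lemma card_descSeqs (S : Finset ℕ) :
    #(descSeqs ℓ J m S)
      = ∑ k ∈ range (#S + 1), (#S).choose k * #(descSeqsOnto ℓ J m (Icc 1 k)) := by
  have hmaps : ∀ w ∈ descSeqs ℓ J m S, (Icc 1 ℓ).image w ∈ S.powerset := fun w hw =>
    mem_powerset.2 (image_subset_iff.2 (mem_seqsIn.1 (mem_descSeqs.1 hw).1).1)
  calc #(descSeqs ℓ J m S)
      = ∑ T ∈ S.powerset, #(descSeqsOnto ℓ J m (Icc 1 #T)) := by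
        rw [card_eq_sum_card_fiberwise hmaps]
        refine sum_congr rfl fun T hT => ?_
        rw [descSeqs_filter_image_eq (mem_powerset.1 hT), card_descSeqsOnto_eq_Icc]
    _ = _ := by rw [sum_powerset_apply_card (fun k => #(descSeqsOnto ℓ J m (Icc 1 k)))]; rfl

end DescentSequences

lemma exists_polynomial_eval_eq_sum_choose_mul {R : Type*} [Field R] [CharZero R]
    (c : ℕ → R) (ℓ : ℕ) (hc : ∀ k, ℓ < k → c k = 0) :
    ∃ p : Polynomial R, ∀ n : ℕ, p.eval (n : R) = ∑ k ∈ range (n + 1), n.choose k * c k := by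
  refine ⟨∑ k ∈ range (ℓ + 1), Polynomial.C (c k / (Nat.factorial k)) * descPochhammer R k,
    fun n => ?_⟩
  have hfac : ∀ k : ℕ, (k.factorial : R) ≠ 0 := fun k => Nat.cast_ne_zero.2 k.factorial_ne_zero
  have hleft : ∑ k ∈ range (ℓ + 1), (n.choose k : R) * c k
      = ∑ k ∈ range (n + ℓ + 1), (n.choose k : R) * c k :=
    sum_subset (range_subset_range.2 (by omega)) fun k _ hk => by
      rw [hc k (by simpa using hk), mul_zero]
  have hright : ∑ k ∈ range (n + 1), (n.choose k : R) * c k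
      = ∑ k ∈ range (n + ℓ + 1), (n.choose k : R) * c k :=
    sum_subset (range_subset_range.2 (by omega)) fun k _ hk => by
      rw [Nat.choose_eq_zero_of_lt (by simpa using hk), Nat.cast_zero, zero_mul]
  rw [hright, ← hleft, Polynomial.eval_finsetSum]
  refine sum_congr rfl fun k _ => ?_
  rw [Polynomial.eval_mul, Polynomial.eval_C, descPochhammer_eval_eq_descFactorial,
    Nat.descFactorial_eq_factorial_mul_choose, Nat.cast_mul]
  field_simp [hfac k]

theorem stmt_5_general (I : Finset ℕ) (m : ℕ) :
    ∃ p : Polynomial ℚ, ∀ n : ℕ, I.sup id ≤ n → (Dcount m I n : ℚ) = p.eval (n : ℚ) := by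
  obtain ⟨p, hp⟩ := exists_polynomial_eval_eq_sum_choose_mul
    (fun k => (#(descSeqsOnto (I.sup id) ↑(I.erase (I.sup id)) m (Icc 1 k)) : ℚ)) (I.sup id)
    (fun k hk => by simp [descSeqsOnto_Icc_eq_empty hk])
  refine ⟨p, fun n _ => ?_⟩
  rw [hp, Dcount, ncard_eq_card_descSeqs, card_descSeqs, Nat.card_Icc, Nat.add_sub_cancel,
    Nat.cast_sum]
  simp only [Nat.cast_mul]

/-- for every positive integer `m`, there is a polynomial `p ∈ ℚ[x]` with
`D^m(I,n) = p(n)` for all integers `n ≥ α_t`. -/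
theorem stmt_5 (I : Finset ℕ) (hI : I.Nonempty) (hIpos : ∀ x ∈ I, 1 ≤ x)
    (m : ℕ) (hm : 1 ≤ m) :
    ∃ p : Polynomial ℚ, ∀ n : ℕ, I.sup id ≤ n → (Dcount m I n : ℚ) = p.eval (n : ℚ) :=
  stmt_5_general I m
end

section
/- For every positive integer m and every integer n ≥ α_t, D^m(I,n) = 𝔡^m(I,n) + 𝔡^m(I \ {α_t}, n). -/
open Finset

/-! Write `a = α_t = max I`. A word `w ∈ S_n^(m)` has descent set `I` or `I \ {a}` exactly when
it has no descent after position `a` and its prefix `w_1 ⋯ w_a` has descent set `I \ {a}`;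
whether `a` itself is a descent decides which of the two cases occurs. Such a `w` is determined
by its prefix, since its tail is the weakly increasing arrangement of the letters the prefix
still misses; conversely every prefix using each letter at most `m` times extends this way.
So truncation to the first `a` letters is a bijection onto the sequences counted by `D^m(I,n)`. -/

lemma eq_or_eq_erase_iff {α : Type*} [LinearOrder α] {I : Finset α} {a : α} (ha : a ∈ I)
    (hle : ∀ x ∈ I, x ≤ a) (D : Set α) :
    (D = ↑I ∨ D = ↑(I.erase a)) ↔ D ⊆ Set.Iic a ∧ D ∩ Set.Iio a = ↑(I.erase a) := by
  have herase : (↑(I.erase a) : Set α) = ↑I ∩ Set.Iio a := by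
    ext x
    simp only [Finset.coe_erase, Set.mem_sdiff, Set.mem_inter_iff, Set.mem_Iio]
    grind
  constructor
  · rintro (rfl | rfl)
    · exact ⟨hle, herase.symm⟩
    · exact ⟨fun x hx => hle x (Finset.mem_of_mem_erase hx),
        by rw [herase, Set.inter_assoc, Set.inter_self]⟩
  · rintro ⟨hsub, hint⟩
    have hsplit : D = D ∩ Set.Iio a ∪ D ∩ {a} := by
      rw [← Set.inter_union_distrib_left, Set.Iio_union_right, Set.inter_eq_left.2 hsub]
    by_cases haD : a ∈ D
    · left
      rw [hsplit, hint, Set.inter_eq_right.2 (Set.singleton_subset_iff.2 haD),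
        ← Finset.coe_singleton, ← Finset.coe_union, Finset.union_singleton, Finset.insert_erase ha]
    · right
      rwa [hsplit, Set.inter_singleton_eq_empty.2 haD, Set.union_empty]

theorem Finset.eqOn_of_monotoneOn_of_map_eq {α β : Type*} [LinearOrder α] [LinearOrder β]
    {s : Finset α} {f g : α → β} (hf : MonotoneOn f s) (hg : MonotoneOn g s)
    (h : s.val.map f = s.val.map g) : Set.EqOn f g s := by
  have hsorted : ∀ {φ : α → β}, MonotoneOn φ s → ((s.sort).map φ).Pairwise (· ≤ ·) :=
    fun hφ => List.pairwise_map.2 <| (s.pairwise_sort _).imp_of_mem fun ha hb hab =>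
      hφ (Finset.mem_sort _ |>.1 ha) (Finset.mem_sort _ |>.1 hb) hab
  have hperm : ((s.sort).map f).Perm ((s.sort).map g) := by
    rw [← Multiset.coe_eq_coe, ← Multiset.map_coe, ← Multiset.map_coe, Finset.sort_eq, h]
  have := hperm.eq_of_pairwise' (hsorted hf) (hsorted hg)
  exact fun x hx => List.map_inj_left.1 this x ((Finset.mem_sort _).2 hx)

section Sequences

variable {a L n : ℕ} {w : ℕ → ℕ}

lemma Seqs.finite (L n : ℕ) : (Seqs L n).Finite := by
  refine (Set.finite_range fun g : Fin (L + 1) → Fin (n + 1) =>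
    fun i => if h : i < L + 1 then (g ⟨i, h⟩ : ℕ) else 0).subset fun w hw => ?_
  have hle : ∀ i, w i ≤ n := fun i => by
    by_cases hi : i ∈ Icc 1 L
    · exact (Finset.mem_Icc.1 (hw.1 i hi)).2
    · simp [hw.2 i hi]
  refine ⟨fun i => ⟨w i, Nat.lt_succ_of_le (hle i)⟩, funext fun i => ?_⟩
  dsimp only
  split_ifs with hi
  · rfl
  · exact (hw.2 i (by simp; omega)).symm

lemma mult_eq_zero_of_notMem (hw : w ∈ Seqs L n) {j : ℕ} (hj : j ∉ Icc 1 n) :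
    mult L w j = 0 :=
  Finset.card_eq_zero.2 <| Finset.filter_eq_empty_iff.2 fun i hi hij => hj (hij ▸ hw.1 i hi)

lemma sum_mult (hw : w ∈ Seqs L n) : ∑ j ∈ Icc 1 n, mult L w j = L := by
  simp only [mult]
  rw [← Finset.card_eq_sum_card_fiberwise hw.1, Nat.card_Icc, Nat.add_sub_cancel]

lemma mult_eq_add_count (haL : a ≤ L) (w : ℕ → ℕ) (j : ℕ) :
    mult L w j = mult a w j + ((Ioc a L).val.map w).count j := by
  have hsplit : Icc 1 L = Icc 1 a ∪ Ioc a L := by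
    ext i; simp only [Finset.mem_union, Finset.mem_Icc, Finset.mem_Ioc]; omega
  rw [Multiset.count_map, mult, hsplit, Finset.filter_union, Finset.card_union_of_disjoint]
  · simp only [mult, eq_comm (a := j)]
    rfl
  · exact Finset.disjoint_filter_filter <| Finset.disjoint_left.2 fun i hi hi' => by
      simp only [Finset.mem_Icc, Finset.mem_Ioc] at hi hi'; omega

lemma Des_subset_Iic_iff : Des L w ⊆ Set.Iic a ↔ MonotoneOn w (Set.Ioc a L) := by
  constructor
  · refine fun h => monotoneOn_of_le_add_one Set.ordConnected_Ioc
      fun i _ ⟨hai, _⟩ ⟨_, hiL⟩ => ?_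
    by_contra hdesc
    exact absurd (h ⟨by omega, by omega, not_le.1 hdesc⟩) (by simpa using hai)
  · intro h i ⟨_, hiL, hdesc⟩
    by_contra hia
    rw [Set.mem_Iic, not_le] at hia
    exact absurd (h ⟨hia, hiL.le⟩ ⟨by omega, hiL⟩ (Nat.le_succ i)) (not_le.2 hdesc)

end Sequences

section Truncation

variable {a L n : ℕ} {v w : ℕ → ℕ}

def truncSeq (a : ℕ) (w : ℕ → ℕ) : ℕ → ℕ := fun i => if i ≤ a then w i else 0

def extendSeq (a : ℕ) (v : ℕ → ℕ) (l : List ℕ) : ℕ → ℕ :=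
  fun i => if i ≤ a then v i else l.getD (i - (a + 1)) 0

lemma truncSeq_mem_Seqs (haL : a ≤ L) (hw : w ∈ Seqs L n) : truncSeq a w ∈ Seqs a n := by
  refine ⟨fun i hi => ?_, fun i hi => ?_⟩
  · have hia : i ≤ a := (Finset.mem_Icc.1 hi).2
    simpa [truncSeq, hia] using hw.1 i (Finset.Icc_subset_Icc_right haL hi)
  · by_cases hia : i ≤ a
    · simpa [truncSeq, hia] using hw.2 i (by simp_all)
    · simp [truncSeq, hia]

lemma truncSeq_eq_self (hv : v ∈ Seqs a n) : truncSeq a v = v :=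
  funext fun i => by
    by_cases hia : i ≤ a
    · simp [truncSeq, hia]
    · simp [truncSeq, hia, hv.2 i (by simp; omega)]

lemma mult_truncSeq (a : ℕ) (w : ℕ → ℕ) (j : ℕ) : mult a (truncSeq a w) j = mult a w j :=
  congrArg Finset.card <| Finset.filter_congr fun i hi => by
    simp [truncSeq, (Finset.mem_Icc.1 hi).2]

lemma Des_truncSeq (haL : a ≤ L) (w : ℕ → ℕ) :
    Des a (truncSeq a w) = Des L w ∩ Set.Iio a := by
  ext i
  simp only [Des, truncSeq, Set.mem_inter_iff, Set.mem_ofPred_eq, Set.mem_Iio]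
  constructor
  · rintro ⟨hi1, hia, hdesc⟩
    simp only [hia.le, show i + 1 ≤ a by omega, if_true] at hdesc
    exact ⟨⟨hi1, by omega, hdesc⟩, hia⟩
  · rintro ⟨⟨hi1, -, hdesc⟩, hia⟩
    simpa [hia.le, show i + 1 ≤ a by omega, hi1, hia] using hdesc

lemma truncSeq_extendSeq (a : ℕ) (v : ℕ → ℕ) (l : List ℕ) :
    truncSeq a (extendSeq a v l) = truncSeq a v :=
  funext fun i => by by_cases hia : i ≤ a <;> simp [truncSeq, extendSeq, hia]

lemma extendSeq_eq_zero {l : List ℕ} {i : ℕ} (hi : a + l.length < i) :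
    extendSeq a v l i = 0 := by
  simp only [extendSeq, show ¬i ≤ a by omega, if_false]
  exact List.getD_eq_default _ _ (by omega)

lemma map_extendSeq_Ioc {l : List ℕ} (hl : l.length = L - a) :
    (Ioc a L).val.map (extendSeq a v l) = l := by
  change ((List.range' (a + 1) (L - a)).map (extendSeq a v l) : Multiset ℕ) = l
  congr 1
  refine List.ext_getElem (by simp [hl]) fun k _ hk => ?_
  simp only [List.getElem_map, List.getElem_range', extendSeq]
  rw [if_neg (by omega), show a + 1 + 1 * k - (a + 1) = k by omega, List.getD_eq_getElem _ _ hk]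

lemma monotoneOn_extendSeq {l : List ℕ} (hl : l.length = L - a) (hs : l.Pairwise (· ≤ ·)) :
    MonotoneOn (extendSeq a v l) (Set.Ioc a L) := by
  rintro i ⟨hai, hiL⟩ j ⟨haj, hjL⟩ hij
  simp only [extendSeq, show ¬i ≤ a by omega, show ¬j ≤ a by omega, if_false,
    List.getD_eq_getElem _ _ (show i - (a + 1) < l.length by omega),
    List.getD_eq_getElem _ _ (show j - (a + 1) < l.length by omega)]
  rcases hij.lt_or_eq with hij | rfl
  · exact List.pairwise_iff_getElem.1 hs _ _ _ _ (by omega)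
  · rfl

end Truncation

def missingLetters (n m : ℕ) (c : ℕ → ℕ) : Multiset ℕ :=
  ∑ j ∈ Icc 1 n, Multiset.replicate (m - c j) j

lemma count_missingLetters (m : ℕ) (c : ℕ → ℕ) {n j : ℕ} (hj : j ∈ Icc 1 n) :
    (missingLetters n m c).count j = m - c j := by
  simp [missingLetters, Multiset.count_sum', Multiset.count_replicate, hj]

lemma mem_Icc_of_mem_missingLetters {n m j : ℕ} {c : ℕ → ℕ} (hj : j ∈ missingLetters n m c) :
    j ∈ Icc 1 n := by
  obtain ⟨i, hi, hji⟩ := Multiset.mem_sum.1 hj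
  rwa [Multiset.eq_of_mem_replicate hji]

lemma card_missingLetters {n m : ℕ} {c : ℕ → ℕ} (hc : ∀ j ∈ Icc 1 n, c j ≤ m) :
    (missingLetters n m c).card = n * m - ∑ j ∈ Icc 1 n, c j := by
  simp [missingLetters, Multiset.card_sum, Finset.sum_tsub_distrib _ hc]

section Bijection

variable {a L n m : ℕ} {v w w' : ℕ → ℕ}

lemma eq_of_truncSeq_eq (haL : a ≤ L) (hw : w ∈ Seqs L n) (hw' : w' ∈ Seqs L n)
    (hmult : ∀ j, mult L w j = mult L w' j) (hmono : MonotoneOn w (Set.Ioc a L))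
    (hmono' : MonotoneOn w' (Set.Ioc a L)) (h : truncSeq a w = truncSeq a w') : w = w' := by
  have htail : (Ioc a L).val.map w = (Ioc a L).val.map w' := Multiset.ext.2 fun j => by
    have hpre : mult a w j = mult a w' j := by rw [← mult_truncSeq, h, mult_truncSeq]
    have := hmult j
    rw [mult_eq_add_count haL, mult_eq_add_count haL w'] at this
    omega
  have hEqOn := Finset.eqOn_of_monotoneOn_of_map_eq (by rwa [Finset.coe_Ioc])
    (by rwa [Finset.coe_Ioc]) htail
  refine funext fun i => ?_
  by_cases hia : i ≤ a
  · simpa [truncSeq, hia] using congrFun h i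
  by_cases hiL : i ≤ L
  · exact hEqOn (by simp; omega)
  · rw [hw.2 i (by simp; omega), hw'.2 i (by simp; omega)]

lemma exists_monotoneOn_extension (haL : a ≤ n * m) (hv : v ∈ Seqs a n)
    (hvm : ∀ j ∈ Icc 1 n, mult a v j ≤ m) :
    ∃ w ∈ Seqs (n * m) n, (∀ j ∈ Icc 1 n, mult (n * m) w j = m) ∧
      MonotoneOn w (Set.Ioc a (n * m)) ∧ truncSeq a w = v := by
  set M := missingLetters n m (mult a v)
  set w := extendSeq a v (M.sort)
  have hlen : (M.sort).length = n * m - a := by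
    rw [Multiset.length_sort, card_missingLetters hvm, sum_mult hv]
  have htail : (Ioc a (n * m)).val.map w = M := by
    rw [map_extendSeq_Ioc hlen, Multiset.sort_eq]
  have htrunc : truncSeq a w = v := by rw [truncSeq_extendSeq, truncSeq_eq_self hv]
  refine ⟨w, ⟨fun i hi => ?_, fun i hi => ?_⟩, fun j hj => ?_,
    monotoneOn_extendSeq hlen (Multiset.pairwise_sort _ _), htrunc⟩
  · by_cases hia : i ≤ a
    · simpa [w, extendSeq, hia] using hv.1 i (by simp_all)
    · refine mem_Icc_of_mem_missingLetters (htail ▸ Multiset.mem_map_of_mem w ?_)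
      simp_all
  · by_cases hia : i ≤ a
    · simpa [w, extendSeq, hia] using hv.2 i (by simp at hi ⊢; omega)
    · exact extendSeq_eq_zero (by simp_all; omega)
  · rw [mult_eq_add_count haL, ← mult_truncSeq, htrunc, htail, count_missingLetters m _ hj]
    exact Nat.add_sub_cancel' (hvm j hj)

theorem bijOn_truncSeq (haL : a ≤ n * m) :
    Set.BijOn (truncSeq a)
      {w ∈ Seqs (n * m) n | (∀ j ∈ Icc 1 n, mult (n * m) w j = m) ∧
        MonotoneOn w (Set.Ioc a (n * m))}
      {v ∈ Seqs a n | ∀ j ∈ Icc 1 n, mult a v j ≤ m} := by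
  refine ⟨fun w ⟨hw, hmult, _⟩ => ⟨truncSeq_mem_Seqs haL hw, fun j hj => ?_⟩,
    fun w ⟨hw, hmult, hmono⟩ w' ⟨hw', hmult', hmono'⟩ h => ?_,
    fun v ⟨hv, hvm⟩ => ?_⟩
  · rw [mult_truncSeq, ← hmult j hj, mult_eq_add_count haL]
    exact Nat.le_add_right _ _
  · refine eq_of_truncSeq_eq haL hw hw' (fun j => ?_) hmono hmono' h
    by_cases hj : j ∈ Icc 1 n
    · rw [hmult j hj, hmult' j hj]
    · rw [mult_eq_zero_of_notMem hw hj, mult_eq_zero_of_notMem hw' hj]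
  · obtain ⟨w, hw, hmult, hmono, htrunc⟩ := exists_monotoneOn_extension haL hv hvm
    exact ⟨w, ⟨hw, hmult, hmono⟩, htrunc⟩

end Bijection

def multipermsWithDes (m : ℕ) (J : Finset ℕ) (n : ℕ) : Set (ℕ → ℕ) :=
  {w ∈ Seqs (n * m) n | Des (n * m) w = ↑J ∧ ∀ j ∈ Icc 1 n, mult (n * m) w j = m}

lemma multipermsWithDes_finite (m : ℕ) (J : Finset ℕ) (n : ℕ) :
    (multipermsWithDes m J n).Finite :=
  (Seqs.finite _ _).subset fun _ hw => hw.1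

lemma disjoint_multipermsWithDes {m n : ℕ} {J J' : Finset ℕ} (h : J ≠ J') :
    Disjoint (multipermsWithDes m J n) (multipermsWithDes m J' n) :=
  Set.disjoint_left.2 fun _ hw hw' => h (Finset.coe_injective (hw.2.1.symm.trans hw'.2.1))

theorem bijOn_truncSeq_multipermsWithDes {m n a : ℕ} {I : Finset ℕ} (haI : a ∈ I)
    (hle : ∀ x ∈ I, x ≤ a) (haL : a ≤ n * m) :
    Set.BijOn (truncSeq a) (multipermsWithDes m I n ∪ multipermsWithDes m (I.erase a) n)
      {v ∈ Seqs a n | Des a v = ↑(I.erase a) ∧ ∀ j ∈ Icc 1 n, mult a v j ≤ m} := by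
  have hdes : ∀ w, (Des (n * m) w = ↑I ∨ Des (n * m) w = ↑(I.erase a)) ↔
      MonotoneOn w (Set.Ioc a (n * m)) ∧ Des a (truncSeq a w) = ↑(I.erase a) := fun w => by
    rw [Des_truncSeq haL, ← Des_subset_Iic_iff]
    exact eq_or_eq_erase_iff haI hle _
  convert (bijOn_truncSeq haL).subset_right (r := {v ∈ Seqs a n | Des a v = ↑(I.erase a) ∧
    ∀ j ∈ Icc 1 n, mult a v j ≤ m}) fun v hv => ⟨hv.1, hv.2.2⟩ using 1
  ext w
  constructor
  · intro hw
    obtain ⟨hwS, hD, hM⟩ : w ∈ Seqs (n * m) n ∧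
        (Des (n * m) w = ↑I ∨ Des (n * m) w = ↑(I.erase a)) ∧
        ∀ j ∈ Icc 1 n, mult (n * m) w j = m := by
      rcases hw with ⟨hwS, hD, hM⟩ | ⟨hwS, hD, hM⟩
      exacts [⟨hwS, Or.inl hD, hM⟩, ⟨hwS, Or.inr hD, hM⟩]
    obtain ⟨hmono, hDt⟩ := (hdes w).1 hD
    obtain ⟨hwt, hMt⟩ := (bijOn_truncSeq haL).mapsTo ⟨hwS, hM, hmono⟩
    exact ⟨⟨hwS, hM, hmono⟩, hwt, hDt, hMt⟩
  · rintro ⟨⟨hwS, hM, hmono⟩, -, hD, -⟩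
    rcases (hdes w).2 ⟨hmono, hD⟩ with hD | hD
    exacts [Or.inl ⟨hwS, hD, hM⟩, Or.inr ⟨hwS, hD, hM⟩]

theorem stmt_6_general (I : Finset ℕ) (hI : I.Nonempty)
    (m : ℕ) (hm : 1 ≤ m) (n : ℕ) (hn : I.sup id ≤ n) :
    Dcount m I n = dP m I n + dP m (I.erase (I.sup id)) n := by
  obtain ⟨a, haI, hsup : I.sup id = a⟩ := Finset.exists_mem_eq_sup I hI id
  have hbij := bijOn_truncSeq_multipermsWithDes (m := m) haI
    (fun x hx => hsup ▸ Finset.le_sup (f := id) hx) (hsup ▸ hn.trans (Nat.le_mul_of_pos_right n hm))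
  rw [Dcount, hsup, ← hbij.ncard_eq, Set.ncard_union_eq
    (disjoint_multipermsWithDes (Finset.erase_ne_self.2 haI).symm)
    (multipermsWithDes_finite _ _ _) (multipermsWithDes_finite _ _ _)]
  rfl

/-- for every positive integer `m` and every `n ≥ α_t`,
`D^m(I,n) = 𝔡^m(I,n) + 𝔡^m(I \ {α_t}, n)`. -/
theorem stmt_6 (I : Finset ℕ) (hI : I.Nonempty) (hIpos : ∀ x ∈ I, 1 ≤ x)
    (m : ℕ) (hm : 1 ≤ m) (n : ℕ) (hn : I.sup id ≤ n) :
    Dcount m I n = dP m I n + dP m (I.erase (I.sup id)) n :=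
  stmt_6_general I hI m hm n hn
end
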